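/- arXiv:2003.00004 — 5 statements merged into one kernel-verified Lean document; each statement's English description precedes it below -/
import Mathlib

section
/- Let μ(A) = γ(m(A)) be a distorted Lebesgue measure with γ strictly increasing and differentiable, γ(0)=0. If f: [0,x] → [0,∞) is nondecreasing and continuous, then the Choquet integral satisfies (C)∫_0^x f(s) dμ(s) = ∫_0^x γ'(x−s) f(s) ds. -/
open MeasureTheory Set Filter Topology
open scoped ENNReal

/-- The Choquet integral of `f` over `A` with respect to the set function `μ`:
`∫_0^∞ μ({f ≥ β} ∩ A) dβ + ∫_{-∞}^0 (μ({f ≥ β} ∩ A) - μ A) dβ`. -/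
noncomputable def choquet {α : Type*} (μ : Set α → ℝ) (A : Set α) (f : α → ℝ) : ℝ :=
  (∫ β in Ioi (0:ℝ), μ ({ω | β ≤ f ω} ∩ A)) +
  ∫ β in Iio (0:ℝ), (μ ({ω | β ≤ f ω} ∩ A) - μ A)

lemma choquet_aux_layer (x : ℝ) (hx0 : 0 ≤ x) (f : ℝ → ℝ)
    (hfmono : MonotoneOn f (Icc 0 x)) (h : ℝ → ℝ)
    (hh : ∀ u ∈ Icc 0 x, h u = f (x - u)) (β : ℝ) :
    ∃ c, 0 ≤ c ∧ c ≤ x ∧ volume ({s | β ≤ f s} ∩ Icc 0 x) = ENNReal.ofReal c ∧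
      Ioo 0 c ⊆ Ioc 0 x ∩ {u | β ≤ h u} ∧ Ioc 0 x ∩ {u | β ≤ h u} ⊆ Ioc 0 c := by
  set T : Set ℝ := Ioc 0 x ∩ {u | β ≤ h u} with hT
  have hTIcc : insert 0 T ⊆ Icc 0 x := by
    rintro y (rfl | hy)
    · exact ⟨le_rfl, hx0⟩
    · exact Ioc_subset_Icc_self hy.1
  have hbdd : BddAbove (insert 0 T) := (bddAbove_Icc).mono hTIcc
  set c := sSup (insert 0 T) with hc
  have hc0 : 0 ≤ c := le_csSup hbdd (mem_insert _ _)
  have hcx : c ≤ x := csSup_le (insert_nonempty _ _) (fun y hy => (hTIcc hy).2)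
  have hlow : ∀ u ∈ T, Ioc (0:ℝ) u ⊆ T := by
    rintro u ⟨⟨hu0, hux⟩, huβ⟩ v ⟨hv0, hvu⟩
    refine ⟨⟨hv0, hvu.trans hux⟩, ?_⟩
    have h1 : h u = f (x - u) := hh u ⟨hu0.le, hux⟩
    have h2 : h v = f (x - v) := hh v ⟨hv0.le, hvu.trans hux⟩
    have : f (x - u) ≤ f (x - v) := by
      refine hfmono ⟨by linarith, by linarith⟩ ⟨by linarith, by linarith⟩ (by linarith)
    simp only [mem_setOf_eq, h2]
    calc β ≤ h u := huβ
      _ = f (x - u) := h1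
      _ ≤ f (x - v) := this
  have hTsub : T ⊆ Ioc 0 c := fun u hu => ⟨hu.1.1, le_csSup hbdd (mem_insert_of_mem _ hu)⟩
  have hIooT : Ioo 0 c ⊆ T := by
    intro v hv
    obtain ⟨u, hu, hvu⟩ := exists_lt_of_lt_csSup (insert_nonempty _ _) hv.2
    rcases hu with rfl | hu
    · exact absurd hvu (not_lt.2 hv.1.le)
    · exact hlow u hu ⟨hv.1, hvu.le⟩
  refine ⟨c, hc0, hcx, ?_, hIooT, hTsub⟩
  have claim1 : Ioo (x - c) x ⊆ {s | β ≤ f s} ∩ Icc 0 x := by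
    intro s hs
    have huT : x - s ∈ T := hIooT ⟨by linarith [hs.2], by linarith [hs.1]⟩
    have : h (x - s) = f (x - (x - s)) := hh _ ⟨by linarith [hs.2], by linarith [hs.1]⟩
    rw [sub_sub_cancel] at this
    exact ⟨by rw [mem_setOf_eq, ← this]; exact huT.2, ⟨by linarith [hs.1], hs.2.le⟩⟩
  have claim2 : {s | β ≤ f s} ∩ Icc 0 x ⊆ Icc (x - c) x := by
    rintro s ⟨hsβ, hs0, hsx⟩
    refine ⟨?_, hsx⟩
    by_contra hlt
    push_neg at hlt
    have huT : x - s ∈ T := by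
      refine ⟨⟨by linarith, by linarith⟩, ?_⟩
      have : h (x - s) = f (x - (x - s)) := hh _ ⟨by linarith, by linarith⟩
      rw [sub_sub_cancel] at this
      rw [mem_setOf_eq, this]; exact hsβ
    have := (hTsub huT).2
    linarith
  refine le_antisymm ?_ ?_
  · calc volume ({s | β ≤ f s} ∩ Icc 0 x) ≤ volume (Icc (x - c) x) := measure_mono claim2
      _ = ENNReal.ofReal c := by rw [Real.volume_Icc, sub_sub_cancel]
  · calc ENNReal.ofReal c = volume (Ioo (x - c) x) := by rw [Real.volume_Ioo, sub_sub_cancel]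
      _ ≤ volume ({s | β ≤ f s} ∩ Icc 0 x) := measure_mono claim1

/-- For a distorted Lebesgue measure `μ(A) = γ(m(A))` with `γ` strictly increasing,
differentiable and `γ(0)=0`, and `f ≥ 0` nondecreasing and continuous on `[0,x]`,
`(C)∫_0^x f dμ = ∫_0^x γ'(x-s) f(s) ds`. -/
theorem choquet_nondecreasing_formula (γ : ℝ → ℝ)
    (hγsm : StrictMonoOn γ (Icc 0 1))
    (hγdiff : ∀ t ∈ Icc (0:ℝ) 1, DifferentiableAt ℝ γ t)
    (hγ0 : γ 0 = 0)
    (x : ℝ) (hx : x ∈ Icc (0:ℝ) 1)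
    (f : ℝ → ℝ) (hfpos : ∀ s, 0 ≤ f s)
    (hfmono : MonotoneOn f (Icc 0 x)) (hfcont : ContinuousOn f (Icc 0 x)) :
    choquet (fun A => γ (volume A).toReal) (Icc 0 x) f
      = ∫ s in (0:ℝ)..x, deriv γ (x - s) * f s := by
  obtain ⟨hx0, hx1⟩ := hx
  -- basic facts about γ
  have hγcont : ContinuousOn γ (Icc 0 1) :=
    fun t ht => (hγdiff t ht).continuousAt.continuousWithinAt
  have hderiv_nonneg : ∀ u ∈ Ioo (0:ℝ) 1, 0 ≤ deriv γ u := by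
    intro u hu
    have hd : HasDerivAt γ (deriv γ u) u := (hγdiff u (Ioo_subset_Icc_self hu)).hasDerivAt
    have htend : Tendsto (slope γ u) (𝓝[>] u) (𝓝 (deriv γ u)) :=
      (hasDerivAt_iff_tendsto_slope.1 hd).mono_left
        (nhdsWithin_mono u (fun t ht => (ne_of_gt ht)))
    refine ge_of_tendsto htend ?_
    filter_upwards [Ioo_mem_nhdsGT_of_mem (⟨le_rfl, hu.2⟩ : u ∈ Ico u 1)] with t ht
    have hle : γ u ≤ γ t :=
      (hγsm.monotoneOn) (Ioo_subset_Icc_self hu) ⟨(hu.1.trans ht.1).le, ht.2.le⟩ ht.1.le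
    simp only [slope_def_field]
    exact div_nonneg (by linarith) (by linarith [ht.1])
  have hintegrable : IntegrableOn (deriv γ) (Ioc 0 1) :=
    intervalIntegral.integrableOn_deriv_of_nonneg hγcont
      (fun u hu => (hγdiff u (Ioo_subset_Icc_self hu)).hasDerivAt) hderiv_nonneg
  have hne_x : ∀ b : ℝ, ∀ᵐ u : ℝ, u ≠ b := by
    intro b
    rw [ae_iff]
    simp [measure_singleton b]
  have haeIoc : ∀ b : ℝ, b ≤ 1 → 0 ≤ᵐ[volume.restrict (Ioc (0:ℝ) b)] deriv γ := by
    intro b hb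
    refine (ae_restrict_iff' measurableSet_Ioc).2 ?_
    filter_upwards [hne_x b] with u hne hu
    exact hderiv_nonneg u ⟨hu.1, (lt_of_le_of_ne hu.2 hne).trans_le hb⟩
  have hγnonneg : ∀ y ∈ Icc (0:ℝ) 1, 0 ≤ γ y := by
    intro y hy
    calc (0:ℝ) = γ 0 := hγ0.symm
      _ ≤ γ y := hγsm.monotoneOn ⟨le_rfl, zero_le_one⟩ hy hy.1
  -- the reflected, continuously extended version of f
  set h : ℝ → ℝ := fun u => f (max 0 (min x (x - u))) with hhdef
  have hh : ∀ u ∈ Icc 0 x, h u = f (x - u) := by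
    intro u hu
    simp only [hhdef]
    rw [min_eq_right (by linarith [hu.1]), max_eq_right (by linarith [hu.2])]
  have hcont_h : Continuous h :=
    hfcont.comp_continuous (continuous_const.max (continuous_const.min (continuous_const.sub continuous_id)))
      (fun u => ⟨le_max_left _ _, max_le hx0 (min_le_left _ _)⟩)
  -- the layer structure
  choose c hc0 hcx hvol hsub1 hsub2 using choquet_aux_layer x hx0 f hfmono h hh
  have hc1 : ∀ β, c β ≤ 1 := fun β => (hcx β).trans hx1
  have hcIcc : ∀ β, c β ∈ Icc (0:ℝ) 1 := fun β => ⟨hc0 β, hc1 β⟩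
  -- LHS reduction
  have hLHS : choquet (fun A => γ (volume A).toReal) (Icc 0 x) f
      = ∫ β in Ioi (0:ℝ), γ (c β) := by
    have e2 : (∫ β in Iio (0:ℝ),
        (γ (volume ({ω | β ≤ f ω} ∩ Icc 0 x)).toReal - γ (volume (Icc 0 x)).toReal)) = 0 := by
      rw [setIntegral_congr_fun measurableSet_Iio (g := fun _ => (0:ℝ)) ?_, integral_zero]
      intro β hβ
      have huniv : {ω : ℝ | β ≤ f ω} = univ :=
        eq_univ_of_forall fun ω => le_trans (le_of_lt hβ) (hfpos ω)
      simp [huniv]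
    have e1 : (∫ β in Ioi (0:ℝ), γ (volume ({ω | β ≤ f ω} ∩ Icc 0 x)).toReal)
        = ∫ β in Ioi (0:ℝ), γ (c β) := by
      refine setIntegral_congr_fun measurableSet_Ioi fun β _ => ?_
      rw [hvol β, ENNReal.toReal_ofReal (hc0 β)]
    simp only [choquet]
    rw [e1, e2, add_zero]
  have hGanti : Antitone (fun β => γ (c β)) := by
    intro β₁ β₂ hle
    refine hγsm.monotoneOn (hcIcc β₂) (hcIcc β₁) ?_
    have hmono : volume ({s | β₂ ≤ f s} ∩ Icc 0 x) ≤ volume ({s | β₁ ≤ f s} ∩ Icc 0 x) :=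
      measure_mono (inter_subset_inter_left _ (fun s hs => le_trans hle hs))
    rw [hvol β₁, hvol β₂] at hmono
    exact (ENNReal.ofReal_le_ofReal_iff (hc0 β₁)).1 hmono
  have hGnonneg : ∀ β, 0 ≤ γ (c β) := fun β => hγnonneg _ (hcIcc β)
  have hLHS2 : (∫ β in Ioi (0:ℝ), γ (c β))
      = (∫⁻ β in Ioi (0:ℝ), ENNReal.ofReal (γ (c β))).toReal :=
    integral_eq_lintegral_of_nonneg_ae (ae_of_all _ hGnonneg)
      (hGanti.measurable.aestronglyMeasurable)
  -- RHS reduction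
  have hRHS : (∫ s in (0:ℝ)..x, deriv γ (x - s) * f s)
      = (∫⁻ u in Ioc (0:ℝ) x, ENNReal.ofReal (deriv γ u) * ENNReal.ofReal (h u)).toReal := by
    have e1 : (∫ s in (0:ℝ)..x, deriv γ (x - s) * f s)
        = ∫ u in (0:ℝ)..x, deriv γ u * f (x - u) := by
      have e0 := intervalIntegral.integral_comp_sub_left (a := (0:ℝ)) (b := x)
        (fun u => deriv γ u * f (x - u)) x
      simp only [sub_zero, sub_self] at e0
      rw [← e0]
      congr 1
      ext s
      rw [sub_sub_cancel]
    rw [e1, intervalIntegral.integral_of_le hx0]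
    have e2 : (∫ u in Ioc (0:ℝ) x, deriv γ u * f (x - u))
        = ∫ u in Ioc (0:ℝ) x, deriv γ u * h u :=
      (setIntegral_congr_fun measurableSet_Ioc
        (fun u hu => by rw [hh u (Ioc_subset_Icc_self hu)])).symm
    rw [e2]
    rw [integral_eq_lintegral_of_nonneg_ae ?_ ?_]
    · congr 1
      refine lintegral_congr_ae ?_
      refine (ae_restrict_iff' measurableSet_Ioc).2 ?_
      filter_upwards [hne_x x] with u hne hu
      rw [ENNReal.ofReal_mul (hderiv_nonneg u ⟨hu.1, (lt_of_le_of_ne hu.2 hne).trans_le hx1⟩)]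
    · refine (ae_restrict_iff' measurableSet_Ioc).2 ?_
      filter_upwards [hne_x x] with u hne hu
      exact mul_nonneg (hderiv_nonneg u ⟨hu.1, (lt_of_le_of_ne hu.2 hne).trans_le hx1⟩) (hfpos _)
    · exact ((measurable_deriv γ).mul hcont_h.measurable).aestronglyMeasurable
  -- the core lintegral identity via Tonelli
  have hcore : (∫⁻ β in Ioi (0:ℝ), ENNReal.ofReal (γ (c β)))
      = ∫⁻ u in Ioc (0:ℝ) x, ENNReal.ofReal (deriv γ u) * ENNReal.ofReal (h u) := by
    set E : Set (ℝ × ℝ) := (Ioi (0:ℝ) ×ˢ Ioc (0:ℝ) x) ∩ {p : ℝ × ℝ | p.1 ≤ h p.2} with hEdef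
    have hEmeas : MeasurableSet E :=
      (measurableSet_Ioi.prod measurableSet_Ioc).inter
        (measurableSet_le measurable_fst (hcont_h.measurable.comp measurable_snd))
    set F : ℝ × ℝ → ℝ≥0∞ := fun p => E.indicator (fun q => ENNReal.ofReal (deriv γ q.2)) p
      with hFdef
    have hFmeas : Measurable F :=
      (ENNReal.measurable_ofReal.comp ((measurable_deriv γ).comp measurable_snd)).indicator hEmeas
    have key_beta : ∀ β : ℝ, 0 < β → (∫⁻ u, F (β, u)) = ENNReal.ofReal (γ (c β)) := by
      intro β hβ
      have hset : MeasurableSet (Ioc (0:ℝ) x ∩ {u | β ≤ h u}) :=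
        measurableSet_Ioc.inter (measurableSet_le measurable_const hcont_h.measurable)
      have h1 : (∫⁻ u, F (β, u))
          = ∫⁻ u in Ioc (0:ℝ) x ∩ {u | β ≤ h u}, ENNReal.ofReal (deriv γ u) := by
        rw [← lintegral_indicator hset]
        refine lintegral_congr fun u => ?_
        by_cases hu : u ∈ Ioc (0:ℝ) x ∩ {u | β ≤ h u}
        · rw [Set.indicator_of_mem hu]
          exact Set.indicator_of_mem (s := E) (a := (β, u))
            (f := fun q => ENNReal.ofReal (deriv γ q.2)) ⟨⟨hβ, hu.1⟩, hu.2⟩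
        · rw [Set.indicator_of_notMem hu]
          exact Set.indicator_of_notMem (s := E) (a := (β, u))
            (f := fun q => ENNReal.ofReal (deriv γ q.2)) (fun hm => hu ⟨hm.1.2, hm.2⟩)
      have h2 : (∫⁻ u in Ioc (0:ℝ) x ∩ {u | β ≤ h u}, ENNReal.ofReal (deriv γ u))
          = ∫⁻ u in Ioc (0:ℝ) (c β), ENNReal.ofReal (deriv γ u) := by
        refine le_antisymm (lintegral_mono_set (hsub2 β)) ?_
        calc ∫⁻ u in Ioc (0:ℝ) (c β), ENNReal.ofReal (deriv γ u)
            = ∫⁻ u in Ioo (0:ℝ) (c β), ENNReal.ofReal (deriv γ u) :=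
              (setLIntegral_congr Ioo_ae_eq_Ioc).symm
          _ ≤ _ := lintegral_mono_set (hsub1 β)
      have hint : IntegrableOn (deriv γ) (Ioc (0:ℝ) (c β)) :=
        hintegrable.mono_set (Ioc_subset_Ioc le_rfl (hc1 β))
      have h3 : (∫⁻ u in Ioc (0:ℝ) (c β), ENNReal.ofReal (deriv γ u))
          = ENNReal.ofReal (∫ u in Ioc (0:ℝ) (c β), deriv γ u) :=
        (ofReal_integral_eq_lintegral_ofReal hint (haeIoc (c β) (hc1 β))).symm
      have h4 : (∫ u in Ioc (0:ℝ) (c β), deriv γ u) = γ (c β) := by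
        rw [← intervalIntegral.integral_of_le (hc0 β)]
        rw [intervalIntegral.integral_eq_sub_of_hasDerivAt
          (f := γ) (f' := deriv γ) ?_ ?_, hγ0, sub_zero]
        · intro t ht
          rw [uIcc_of_le (hc0 β)] at ht
          exact (hγdiff t ⟨ht.1, ht.2.trans (hc1 β)⟩).hasDerivAt
        · exact (intervalIntegrable_iff_integrableOn_Ioc_of_le (hc0 β)).2 hint
      rw [h1, h2, h3, h4]
    have key_u : ∀ u : ℝ, (∫⁻ β, F (β, u))
        = (Ioc (0:ℝ) x).indicator
            (fun u => ENNReal.ofReal (deriv γ u) * ENNReal.ofReal (h u)) u := by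
      intro u
      by_cases hu : u ∈ Ioc (0:ℝ) x
      · have hpt : ∀ β, F (β, u)
            = (Ioc (0:ℝ) (h u)).indicator (fun _ => ENNReal.ofReal (deriv γ u)) β := by
          intro β
          by_cases hmem : β ∈ Ioc (0:ℝ) (h u)
          · rw [Set.indicator_of_mem hmem]
            exact Set.indicator_of_mem (s := E) (a := (β, u))
              (f := fun q => ENNReal.ofReal (deriv γ q.2)) ⟨⟨hmem.1, hu⟩, hmem.2⟩
          · rw [Set.indicator_of_notMem hmem]
            exact Set.indicator_of_notMem (s := E) (a := (β, u))
              (f := fun q => ENNReal.ofReal (deriv γ q.2)) (fun hm => hmem ⟨hm.1.1, hm.2⟩)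
        rw [lintegral_congr hpt, lintegral_indicator_const measurableSet_Ioc,
          Real.volume_Ioc, sub_zero, Set.indicator_of_mem hu]
      · have hpt : ∀ β, F (β, u) = 0 :=
          fun β => Set.indicator_of_notMem (fun hmem => hu hmem.1.2) _
        rw [lintegral_congr hpt, Set.indicator_of_notMem hu]
        simp
    calc ∫⁻ β in Ioi (0:ℝ), ENNReal.ofReal (γ (c β))
        = ∫⁻ β, (Ioi (0:ℝ)).indicator (fun β => ENNReal.ofReal (γ (c β))) β :=
          (lintegral_indicator measurableSet_Ioi _).symm
      _ = ∫⁻ β, ∫⁻ u, F (β, u) := by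
          refine lintegral_congr fun β => ?_
          by_cases hβ : 0 < β
          · rw [Set.indicator_of_mem (mem_Ioi.2 hβ)]
            exact (key_beta β hβ).symm
          · rw [Set.indicator_of_notMem (by simpa using hβ)]
            have hz : ∀ u, F (β, u) = 0 :=
              fun u => Set.indicator_of_notMem (s := E) (a := (β, u))
                (f := fun q => ENNReal.ofReal (deriv γ q.2)) (fun hmem => hβ hmem.1.1)
            simp [hz]
      _ = ∫⁻ u, ∫⁻ β, F (β, u) := lintegral_lintegral_swap hFmeas.aemeasurable
      _ = ∫⁻ u, (Ioc (0:ℝ) x).indicator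
            (fun u => ENNReal.ofReal (deriv γ u) * ENNReal.ofReal (h u)) u :=
          lintegral_congr key_u
      _ = _ := lintegral_indicator measurableSet_Ioc _
  rw [hLHS, hLHS2, hRHS, hcore]
end

section
/- Let μ(A) = γ(m(A)) be a distorted Lebesgue measure with γ strictly increasing and differentiable, γ(0)=0. If f: [0,x] → [0,∞) is nonincreasing and continuous, then (C)∫_0^x f(s) dμ(s) = ∫_0^x γ'(s) f(s) ds. -/
/-!
For nonincreasing `f`, every superlevel set `{f ≥ β} ∩ [0, x]` is an initial segment `[0, c]` up
to a null set. On initial segments the distorted measure `γ (m [0, c]) = γ c` agrees with the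
measure `γ'(s) ds`, by the fundamental theorem of calculus (`γ' ≥ 0` is integrable because `γ` is
monotone). So the Choquet integral, whose negative part vanishes as `f ≥ 0`, is the layer-cake
expression of `∫ f γ' ds`.
-/

open MeasureTheory Set Filter Topology

theorem choquet_eq_integral_Ioi_of_nonneg {α : Type*} (μ : Set α → ℝ) {A : Set α} {f : α → ℝ}
    (hf : ∀ ω ∈ A, 0 ≤ f ω) :
    choquet μ A f = ∫ β in Ioi (0:ℝ), μ ({ω | β ≤ f ω} ∩ A) := by
  have hneg : EqOn (fun β => μ ({ω | β ≤ f ω} ∩ A) - μ A) (fun _ => 0) (Iio 0) := fun β hβ => by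
    have hA : {ω | β ≤ f ω} ∩ A = A := inter_eq_right.2 fun ω hω => (le_of_lt hβ).trans (hf ω hω)
    simp only [hA, sub_self]
  rw [choquet, setIntegral_congr_fun measurableSet_Iio hneg, integral_zero, add_zero]

theorem AntitoneOn.setOf_le_inter_Icc_ae_eq {μ : Measure ℝ} [NullSingletonClass μ] {f : ℝ → ℝ}
    {a b : ℝ} (hab : a ≤ b) (hf : AntitoneOn f (Icc a b)) (β : ℝ) :
    ∃ c ∈ Icc a b, ({ω | β ≤ f ω} ∩ Icc a b : Set ℝ) =ᵐ[μ] Icc a c := by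
  set S := {ω | β ≤ f ω} ∩ Icc a b
  -- `Ioo a c ⊆ S ⊆ Icc a c` for `c := sSup (insert a S)`; inserting `a` gives `c = a` if `S = ∅`.
  have hbound : ∀ ω ∈ insert a S, ω ≤ b := by
    rintro ω (rfl | hω)
    exacts [hab, hω.2.2]
  have hbdd : BddAbove (insert a S) := ⟨b, hbound⟩
  refine ⟨sSup (insert a S), ⟨le_csSup hbdd (mem_insert _ _),
    csSup_le (insert_nonempty _ _) hbound⟩, ?_⟩
  have hS_sub : S ⊆ Icc a (sSup (insert a S)) := fun ω hω =>
    ⟨hω.2.1, le_csSup hbdd (mem_insert_of_mem _ hω)⟩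
  have hIoo_sub : Ioo a (sSup (insert a S)) ⊆ S := by
    intro ω hω
    obtain ⟨s, hs, hωs⟩ := exists_lt_of_lt_csSup (insert_nonempty _ _) hω.2
    rcases hs with rfl | hs
    · exact absurd hω.1 hωs.not_gt
    · have hωI : ω ∈ Icc a b := ⟨hω.1.le, hωs.le.trans hs.2.2⟩
      exact ⟨hs.1.trans (hf hωI hs.2 hωs.le), hωI⟩
  exact hS_sub.eventuallyLE.antisymm (Ioo_ae_eq_Icc.symm.le.trans hIoo_sub.eventuallyLE)

theorem AntitoneOn.integrable_of_absolutelyContinuous {f : ℝ → ℝ} {a b : ℝ} {μ ν : Measure ℝ}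
    [IsFiniteMeasure μ] (hf : AntitoneOn f (Icc a b)) (hμ : μ ≪ ν.restrict (Icc a b)) :
    Integrable f μ := by
  refine Integrable.of_bound
    ((aemeasurable_restrict_of_antitoneOn measurableSet_Icc hf).mono_ac hμ).aestronglyMeasurable
    (max |f b| |f a|) (hμ.ae_le ?_)
  filter_upwards [ae_restrict_mem measurableSet_Icc] with s hs
  have ha : a ∈ Icc a b := ⟨le_rfl, hs.1.trans hs.2⟩
  have hb : b ∈ Icc a b := ⟨hs.1.trans hs.2, le_rfl⟩
  exact abs_le_max_abs_abs (hf hs hb hs.2) (hf ha hs hs.1)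

theorem MonotoneOn.deriv_nonneg_of_mem_Icc {g : ℝ → ℝ} {a b t : ℝ} (hg : MonotoneOn g (Icc a b))
    (hab : a < b) (ht : t ∈ Icc a b) (hd : DifferentiableAt ℝ g t) : 0 ≤ deriv g t := by
  rw [← hd.derivWithin (uniqueDiffOn_Icc hab t ht)]
  exact hg.derivWithin_nonneg

theorem integrableOn_Icc_deriv_of_nonneg {g : ℝ → ℝ} {a b : ℝ}
    (hd : ∀ t ∈ Icc a b, DifferentiableAt ℝ g t) (hnn : ∀ t ∈ Icc a b, 0 ≤ deriv g t) :
    IntegrableOn (deriv g) (Icc a b) :=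
  (integrableOn_Icc_iff_integrableOn_Ioc).2 <| intervalIntegral.integrableOn_deriv_of_nonneg
    (fun t ht => (hd t ht).continuousAt.continuousWithinAt)
    (fun t ht => (hd t (Ioo_subset_Icc_self ht)).hasDerivAt)
    (fun t ht => hnn t (Ioo_subset_Icc_self ht))

theorem lintegral_ofReal_deriv_Icc {g : ℝ → ℝ} {a b : ℝ} (hab : a ≤ b)
    (hd : ∀ t ∈ Icc a b, DifferentiableAt ℝ g t) (hnn : ∀ t ∈ Icc a b, 0 ≤ deriv g t) :
    ∫⁻ t in Icc a b, ENNReal.ofReal (deriv g t) = ENNReal.ofReal (g b - g a) := by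
  rw [← ofReal_integral_eq_lintegral_ofReal (integrableOn_Icc_deriv_of_nonneg hd hnn)
      ((ae_restrict_mem measurableSet_Icc).mono hnn),
    integral_Icc_eq_integral_Ioc, ← intervalIntegral.integral_of_le hab,
    intervalIntegral.integral_deriv_eq_sub (fun t ht => hd t (uIcc_of_le hab ▸ ht))
      (intervalIntegrable_iff_integrableOn_Icc_of_le hab |>.2
        (integrableOn_Icc_deriv_of_nonneg hd hnn))]

theorem measureReal_withDensity_deriv_setOf_le {γ f : ℝ → ℝ} {x : ℝ} (hx : 0 ≤ x)
    (hγd : ∀ t ∈ Icc 0 x, DifferentiableAt ℝ γ t) (hγ' : ∀ t ∈ Icc 0 x, 0 ≤ deriv γ t)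
    (hf : AntitoneOn f (Icc 0 x)) (β : ℝ) :
    ((volume.restrict (Icc 0 x)).withDensity fun s => ENNReal.ofReal (deriv γ s)).real
      {ω | β ≤ f ω} = γ (volume ({ω | β ≤ f ω} ∩ Icc 0 x)).toReal - γ 0 := by
  have hγm : MonotoneOn γ (Icc 0 x) := monotoneOn_of_deriv_nonneg (convex_Icc 0 x)
    (fun t ht => (hγd t ht).continuousAt.continuousWithinAt)
    (fun t ht => (hγd t (interior_subset ht)).differentiableWithinAt)
    (fun t ht => hγ' t (interior_subset ht))
  obtain ⟨c, hc, hS⟩ := hf.setOf_le_inter_Icc_ae_eq (μ := volume) hx β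
  have hsub : Icc 0 c ⊆ Icc 0 x := Icc_subset_Icc_right hc.2
  rw [measureReal_def, withDensity_apply', Measure.restrict_restrict' measurableSet_Icc,
    setLIntegral_congr hS, measure_congr hS, Real.volume_Icc, sub_zero, ENNReal.toReal_ofReal hc.1,
    lintegral_ofReal_deriv_Icc hc.1 (fun t ht => hγd t (hsub ht)) (fun t ht => hγ' t (hsub ht)),
    ENNReal.toReal_ofReal (sub_nonneg.2 (hγm (left_mem_Icc.2 hx) hc hc.1))]

theorem choquet_nonincreasing_formula_general (γ : ℝ → ℝ)
    (hγsm : StrictMonoOn γ (Icc 0 1))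
    (hγdiff : ∀ t ∈ Icc (0:ℝ) 1, DifferentiableAt ℝ γ t)
    (hγ0 : γ 0 = 0)
    (x : ℝ) (hx : x ∈ Icc (0:ℝ) 1)
    (f : ℝ → ℝ) (hfpos : ∀ s, 0 ≤ f s)
    (hfanti : AntitoneOn f (Icc 0 x)) :
    choquet (fun A => γ (volume A).toReal) (Icc 0 x) f
      = ∫ s in (0:ℝ)..x, deriv γ s * f s := by
  obtain ⟨hx0, hx1⟩ := hx
  have hγd : ∀ t ∈ Icc 0 x, DifferentiableAt ℝ γ t := fun t ht =>
    hγdiff t ⟨ht.1, ht.2.trans hx1⟩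
  have hγ' : ∀ t ∈ Icc 0 x, 0 ≤ deriv γ t := fun t ht =>
    hγsm.monotoneOn.deriv_nonneg_of_mem_Icc zero_lt_one ⟨ht.1, ht.2.trans hx1⟩ (hγd t ht)
  set ν := (volume.restrict (Icc 0 x)).withDensity fun s => ENNReal.ofReal (deriv γ s)
  have : IsFiniteMeasure ν :=
    isFiniteMeasure_withDensity_ofReal (integrableOn_Icc_deriv_of_nonneg hγd hγ').2
  have hν : ∀ β, ν.real {ω | β ≤ f ω} = γ (volume ({ω | β ≤ f ω} ∩ Icc 0 x)).toReal := by
    simpa only [hγ0, sub_zero] using measureReal_withDensity_deriv_setOf_le hx0 hγd hγ' hfanti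
  rw [choquet_eq_integral_Ioi_of_nonneg _ fun ω _ => hfpos ω]
  calc ∫ β in Ioi 0, γ (volume ({ω | β ≤ f ω} ∩ Icc 0 x)).toReal
      = ∫ β in Ioi 0, ν.real {ω | β ≤ f ω} := by simp only [hν]
    _ = ∫ s, f s ∂ν :=
      ((hfanti.integrable_of_absolutelyContinuous (withDensity_absolutelyContinuous _ _)
        ).integral_eq_integral_meas_le (ae_of_all _ hfpos)).symm
    _ = ∫ s in Icc 0 x, deriv γ s * f s := by
      rw [integral_withDensity_eq_integral_toReal_smul (measurable_deriv γ).ennreal_ofReal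
        (ae_of_all _ fun _ => ENNReal.ofReal_lt_top)]
      refine setIntegral_congr_fun measurableSet_Icc fun s hs => ?_
      rw [ENNReal.toReal_ofReal (hγ' s hs), smul_eq_mul]
    _ = ∫ s in (0:ℝ)..x, deriv γ s * f s := by
      rw [intervalIntegral.integral_of_le hx0, integral_Icc_eq_integral_Ioc]

/-- For a distorted Lebesgue measure `μ(A) = γ(m(A))` with `γ` strictly increasing,
differentiable and `γ(0)=0`, and `f ≥ 0` nonincreasing and continuous on `[0,x]`,
`(C)∫_0^x f dμ = ∫_0^x γ'(s) f(s) ds`. -/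
theorem choquet_nonincreasing_formula (γ : ℝ → ℝ)
    (hγsm : StrictMonoOn γ (Icc 0 1))
    (hγdiff : ∀ t ∈ Icc (0:ℝ) 1, DifferentiableAt ℝ γ t)
    (hγ0 : γ 0 = 0)
    (x : ℝ) (hx : x ∈ Icc (0:ℝ) 1)
    (f : ℝ → ℝ) (hfpos : ∀ s, 0 ≤ f s)
    (hfanti : AntitoneOn f (Icc 0 x)) (hfcont : ContinuousOn f (Icc 0 x)) :
    choquet (fun A => γ (volume A).toReal) (Icc 0 x) f
      = ∫ s in (0:ℝ)..x, deriv γ s * f s :=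
  choquet_nonincreasing_formula_general γ hγsm hγdiff hγ0 x hx f hfpos hfanti
end

section
/- Let μ be a monotone, submodular, continuous-from-below set function on the Borel subsets of [0,1], 1 < p < ∞, 1/p + 1/q = 1. Then for all 0 ≤ x ≤ y ≤ 1 and all nonnegative f with (C)∫_0^1 f^p dμ < ∞, the Volterra–Choquet operator V(f)(x) = (C)∫_{[0,x]} f dμ satisfies |V(f)(y) − V(f)(x)| ≤ ‖f‖_{L_{p,μ}} · μ([x,y])^{1/q}, where ‖f‖_{L_{p,μ}} = ((C)∫_0^1 f^p dμ)^{1/p}. -/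
open MeasureTheory Set Filter Topology

theorem setIntegral_Ioi_comp_add_right (F : ℝ → ℝ) (b : ℝ) :
    ∫ β in Ioi 0, F (β + b) = ∫ β in Ioi b, F β := by
  have h := (measurePreserving_add_right volume b).setIntegral_preimage_emb
    (measurableEmbedding_addRight b) F (Ioi b)
  rwa [preimage_add_const_Ioi, sub_self] at h

lemma le_rpow_mul_rpow_of_forall_mul_le_of_pos {p q I J M : ℝ} (hpq : p.HolderConjugate q)
    (hJ : 0 < J) (hM : 0 < M) (h : ∀ s > 0, s * I ≤ s ^ p * J / p + M / q) :
    I ≤ J ^ (1 / p) * M ^ (1 / q) := by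
  -- the scale at which the two terms of the bound balance
  set s := (M / J) ^ (1 / p) with hs_def
  have hs : 0 < s := by positivity
  have hsp : s ^ p = M / J := by
    rw [hs_def, one_div, Real.rpow_inv_rpow (by positivity) hpq.ne_zero]
  have hsI : s * I ≤ M := by
    calc s * I ≤ M / J * J / p + M / q := hsp ▸ h s hs
      _ = M * (p⁻¹ + q⁻¹) := by field_simp
      _ = M := by rw [hpq.inv_add_inv_eq_one, mul_one]
  have hMq : M ^ (1 / q) = M / M ^ (1 / p) := by
    rw [one_div q, ← hpq.one_sub_inv, ← one_div, Real.rpow_sub hM, Real.rpow_one]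
  calc I ≤ M / s := by rwa [le_div_iff₀' hs]
    _ = J ^ (1 / p) * M ^ (1 / q) := by
      rw [hs_def, Real.div_rpow hM.le hJ.le, hMq]
      field_simp

theorem le_rpow_mul_rpow_of_forall_mul_le {p q I J M : ℝ} (hpq : p.HolderConjugate q)
    (hJ : 0 ≤ J) (hM : 0 ≤ M) (h : ∀ s > 0, s * I ≤ s ^ p * J / p + M / q) :
    I ≤ J ^ (1 / p) * M ^ (1 / q) := by
  have hp := hpq.pos
  have hq := hpq.symm.pos
  -- perturbing `J` and `M` by `ε` reaches the case where the optimal scale exists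
  have hlim : Tendsto (fun ε => (J + ε) ^ (1 / p) * (M + ε) ^ (1 / q)) (𝓝[>] 0)
      (𝓝 (J ^ (1 / p) * M ^ (1 / q))) := by
    have hcont : Continuous fun ε : ℝ => (J + ε) ^ (1 / p) * (M + ε) ^ (1 / q) := by
      fun_prop (disch := positivity)
    simpa using (hcont.tendsto 0).mono_left nhdsWithin_le_nhds
  refine ge_of_tendsto hlim (eventually_nhdsWithin_of_forall fun ε (hε : 0 < ε) => ?_)
  refine le_rpow_mul_rpow_of_forall_mul_le_of_pos hpq (by positivity) (by positivity)
    fun s hs => (h s hs).trans ?_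
  gcongr <;> linarith

section Choquet

variable {α : Type*} {μ : Set α → ℝ} {A B : Set α} {f g h : α → ℝ}

theorem union_le_add_of_submodular (hμ : ∀ A, 0 ≤ μ A)
    (hsub : ∀ A B : Set α, μ (A ∪ B) + μ (A ∩ B) ≤ μ A + μ B) (A B : Set α) :
    μ (A ∪ B) ≤ μ A + μ B := by
  linarith [hsub A B, hμ (A ∩ B)]

def distribFun (μ : Set α → ℝ) (A : Set α) (g : α → ℝ) (β : ℝ) : ℝ :=
  μ ({t | β ≤ g t} ∩ A)

theorem distribFun_nonneg (hμ : ∀ A, 0 ≤ μ A) (β : ℝ) : 0 ≤ distribFun μ A g β :=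
  hμ _

theorem distribFun_le_measure (hmono : Monotone μ) (β : ℝ) : distribFun μ A g β ≤ μ A :=
  hmono inter_subset_right

theorem distribFun_mono_set (hmono : Monotone μ) (hAB : A ⊆ B) (β : ℝ) :
    distribFun μ A g β ≤ distribFun μ B g β :=
  hmono (inter_subset_inter_right _ hAB)

theorem distribFun_antitone (hmono : Monotone μ) : Antitone (distribFun μ A g) :=
  fun _ _ hβ => hmono (inter_subset_inter_left _ fun _ ht => hβ.trans ht)

theorem choquet_eq_integral_distribFun (hg : ∀ t, 0 ≤ g t) :
    choquet μ A g = ∫ β in Ioi 0, distribFun μ A g β := by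
  have hneg : ∀ β ∈ Iio (0:ℝ), μ ({t | β ≤ g t} ∩ A) - μ A = 0 := fun β hβ => by
    have hlevel : {t | β ≤ g t} = univ := eq_univ_of_forall fun t => (le_of_lt hβ).trans (hg t)
    rw [hlevel, univ_inter, sub_self]
  rw [choquet, setIntegral_congr_fun measurableSet_Iio hneg, integral_zero, add_zero]
  rfl

theorem choquet_nonneg (hμ : ∀ A, 0 ≤ μ A) (hg : ∀ t, 0 ≤ g t) : 0 ≤ choquet μ A g := by
  rw [choquet_eq_integral_distribFun hg]
  exact setIntegral_nonneg measurableSet_Ioi fun β _ => distribFun_nonneg hμ β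

theorem IntegrableOn.distribFun_of_subset (hμ : ∀ A, 0 ≤ μ A) (hmono : Monotone μ)
    (hAB : A ⊆ B) (hB : IntegrableOn (distribFun μ B g) (Ioi 0)) :
    IntegrableOn (distribFun μ A g) (Ioi 0) :=
  hB.mono' (distribFun_antitone hmono).measurable.aestronglyMeasurable <|
    Eventually.of_forall fun β => by
      rw [Real.norm_of_nonneg (distribFun_nonneg hμ β)]
      exact distribFun_mono_set hmono hAB β

/-- On the levels `β ≤ 1` the distribution function is bounded by `μ A`, and on the levels
`β ≥ 1` the level sets of `g` lie inside those of `g ^ p`. -/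
theorem integrableOn_distribFun_of_rpow (hμ : ∀ A, 0 ≤ μ A) (hmono : Monotone μ) {p : ℝ}
    (hp : 1 ≤ p)
    (hgp : IntegrableOn (distribFun μ A fun t => g t ^ p) (Ioi 0)) :
    IntegrableOn (distribFun μ A g) (Ioi 0) := by
  have hmeas : Measurable (distribFun μ A g) := (distribFun_antitone hmono).measurable
  rw [← Ioc_union_Ioi_eq_Ioi zero_le_one]
  refine IntegrableOn.union ?_ ?_
  · refine Integrable.mono' (integrableOn_const (C := μ A) measure_Ioc_lt_top.ne)
      hmeas.aestronglyMeasurable (Eventually.of_forall fun β => ?_)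
    rw [Real.norm_of_nonneg (distribFun_nonneg hμ β)]
    exact distribFun_le_measure hmono β
  · refine Integrable.mono' (hgp.mono_set (Ioi_subset_Ioi zero_le_one))
      hmeas.aestronglyMeasurable
      ((ae_restrict_mem measurableSet_Ioi).mono fun β (hβ : 1 < β) => ?_)
    rw [Real.norm_of_nonneg (distribFun_nonneg hμ β)]
    refine hmono (inter_subset_inter_left _ fun t (ht : β ≤ g t) => ?_)
    have hgt : 1 ≤ g t := hβ.le.trans ht
    exact ht.trans (Real.self_le_rpow_of_one_le hgt hp)

theorem choquet_mono_set (hμ : ∀ A, 0 ≤ μ A) (hmono : Monotone μ) (hg : ∀ t, 0 ≤ g t)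
    (hAB : A ⊆ B) (hB : IntegrableOn (distribFun μ B g) (Ioi 0)) :
    choquet μ A g ≤ choquet μ B g := by
  rw [choquet_eq_integral_distribFun hg, choquet_eq_integral_distribFun hg]
  exact integral_mono_of_nonneg (Eventually.of_forall fun β => distribFun_nonneg hμ β) hB
    (Eventually.of_forall fun β => distribFun_mono_set hmono hAB β)

theorem choquet_union_le (hμ : ∀ A, 0 ≤ μ A) (hsubadd : ∀ A B : Set α, μ (A ∪ B) ≤ μ A + μ B)
    (hg : ∀ t, 0 ≤ g t) (hA : IntegrableOn (distribFun μ A g) (Ioi 0))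
    (hB : IntegrableOn (distribFun μ B g) (Ioi 0)) :
    choquet μ (A ∪ B) g ≤ choquet μ A g + choquet μ B g := by
  simp only [choquet_eq_integral_distribFun hg]
  rw [← integral_add hA hB]
  refine integral_mono_of_nonneg (Eventually.of_forall fun β => distribFun_nonneg hμ β)
    (hA.add hB) (Eventually.of_forall fun β => ?_)
  simpa only [distribFun, inter_union_distrib_left] using hsubadd _ _

/-- The pointwise bound `g ≤ a h + b` passes to the distribution functions after the affine
change of level `β ↦ a⁻¹ (β - b)`, which costs at most `b μ A` on the levels `β ≤ b`. -/
theorem integral_distribFun_le_mul_add (hμ : ∀ A, 0 ≤ μ A) (hmono : Monotone μ) {a b : ℝ}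
    (ha : 0 < a) (hb : 0 ≤ b) (hgh : ∀ t, g t ≤ a * h t + b)
    (hg : IntegrableOn (distribFun μ A g) (Ioi 0))
    (hh : IntegrableOn (distribFun μ A h) (Ioi 0)) :
    ∫ β in Ioi 0, distribFun μ A g β ≤ a * (∫ β in Ioi 0, distribFun μ A h β) + b * μ A := by
  have hsplit : ∫ β in Ioi 0, distribFun μ A g β
      = (∫ β in Ioi b, distribFun μ A g β) + ∫ β in Ioc 0 b, distribFun μ A g β := by
    rw [add_comm, ← setIntegral_union Ioc_disjoint_Ioi_same measurableSet_Ioi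
      (hg.mono_set Ioc_subset_Ioi_self) (hg.mono_set (Ioi_subset_Ioi hb)),
      Ioc_union_Ioi_eq_Ioi hb]
  have hh_scaled : IntegrableOn (fun β => distribFun μ A h (a⁻¹ * β)) (Ioi 0) :=
    (integrableOn_Ioi_comp_mul_left_iff _ 0 (inv_pos.2 ha)).2 (by rwa [mul_zero])
  have hhigh : ∫ β in Ioi b, distribFun μ A g β ≤ a * ∫ β in Ioi 0, distribFun μ A h β := by
    rw [← setIntegral_Ioi_comp_add_right]
    calc ∫ β in Ioi 0, distribFun μ A g (β + b)
        ≤ ∫ β in Ioi 0, distribFun μ A h (a⁻¹ * β) := by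
          refine integral_mono_of_nonneg
            (Eventually.of_forall fun β => distribFun_nonneg hμ _) hh_scaled
            (Eventually.of_forall fun β => hmono (inter_subset_inter_left _ fun t ht => ?_))
          have ht' : β + b ≤ g t := ht
          show a⁻¹ * β ≤ h t
          rw [inv_mul_le_iff₀ ha]
          linarith [hgh t]
      _ = a * ∫ β in Ioi 0, distribFun μ A h β := by
          rw [integral_comp_mul_left_Ioi _ _ (inv_pos.2 ha), mul_zero, inv_inv, smul_eq_mul]
  have hlow : ∫ β in Ioc 0 b, distribFun μ A g β ≤ b * μ A := by
    calc ∫ β in Ioc 0 b, distribFun μ A g β ≤ ∫ _ in Ioc 0 b, μ A :=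
          setIntegral_mono_on (hg.mono_set Ioc_subset_Ioi_self)
            (integrableOn_const measure_Ioc_lt_top.ne) measurableSet_Ioc
            fun β _ => distribFun_le_measure hmono β
      _ = b * μ A := by
          rw [setIntegral_const, Real.volume_real_Ioc_of_le hb, sub_zero, smul_eq_mul]
  rw [hsplit]
  exact add_le_add hhigh hlow

theorem choquet_le_rpow_mul_rpow (hμ : ∀ A, 0 ≤ μ A) (hmono : Monotone μ) {p q : ℝ}
    (hpq : p.HolderConjugate q) (hf : ∀ t, 0 ≤ f t)
    (hfp : IntegrableOn (distribFun μ A fun t => f t ^ p) (Ioi 0)) :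
    choquet μ A f ≤ choquet μ A (fun t => f t ^ p) ^ (1 / p) * μ A ^ (1 / q) := by
  have hp := hpq.pos
  have hq := hpq.symm.pos
  rw [choquet_eq_integral_distribFun hf,
    choquet_eq_integral_distribFun fun t => Real.rpow_nonneg (hf t) p]
  refine le_rpow_mul_rpow_of_forall_mul_le hpq
    (setIntegral_nonneg measurableSet_Ioi fun β _ => distribFun_nonneg hμ β) (hμ A)
    fun s hs => ?_
  have hyoung : ∀ t, f t ≤ s ^ p / (s * p) * f t ^ p + 1 / (s * q) := fun t => by
    have hy := Real.young_inequality_of_nonneg (mul_nonneg hs.le (hf t)) zero_le_one hpq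
    rw [Real.mul_rpow hs.le (hf t), Real.one_rpow, mul_one] at hy
    calc f t = s⁻¹ * (s * f t) := by field_simp
      _ ≤ s⁻¹ * (s ^ p * f t ^ p / p + 1 / q) := by gcongr
      _ = s ^ p / (s * p) * f t ^ p + 1 / (s * q) := by field_simp
  have hbound := integral_distribFun_le_mul_add hμ hmono (by positivity) (by positivity) hyoung
    (integrableOn_distribFun_of_rpow hμ hmono hpq.lt.le hfp) hfp
  calc s * ∫ β in Ioi 0, distribFun μ A f β
      ≤ s * (s ^ p / (s * p) * (∫ β in Ioi 0, distribFun μ A (fun t => f t ^ p) β)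
        + 1 / (s * q) * μ A) := mul_le_mul_of_nonneg_left hbound hs.le
    _ = _ := by field_simp

end Choquet

theorem volterraChoquet_holder_estimate_general
    (μ : Set ℝ → ℝ) (hμ0 : μ ∅ = 0)
    (hμmono : ∀ A B : Set ℝ, A ⊆ B → μ A ≤ μ B)
    (hμsub : ∀ A B : Set ℝ, μ (A ∪ B) + μ (A ∩ B) ≤ μ A + μ B)
    (p q : ℝ) (hp : 1 < p) (hpq : 1/p + 1/q = 1)
    (f : ℝ → ℝ) (hfpos : ∀ t, 0 ≤ f t)
    (hfint : IntegrableOn (fun β => μ ({t | β ≤ f t ^ p} ∩ Icc 0 1)) (Ioi (0:ℝ)))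
    (x y : ℝ) (hx : x ∈ Icc (0:ℝ) 1) (hy : y ∈ Icc (0:ℝ) 1) (hxy : x ≤ y) :
    |choquet μ (Icc 0 y) f - choquet μ (Icc 0 x) f|
      ≤ (choquet μ (Icc 0 1) (fun t => f t ^ p)) ^ (1/p) * μ (Icc x y) ^ (1/q) := by
  have hmono : Monotone μ := fun A B => hμmono A B
  have hμ : ∀ A, 0 ≤ μ A := fun A => hμ0 ▸ hμmono ∅ A (empty_subset A)
  have hconj : p.HolderConjugate q :=
    Real.holderConjugate_iff.2 ⟨hp, by simpa only [one_div] using hpq⟩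
  have hfp : ∀ A ⊆ Icc (0:ℝ) 1, IntegrableOn (distribFun μ A fun t => f t ^ p) (Ioi 0) :=
    fun A hA => IntegrableOn.distribFun_of_subset hμ hmono hA hfint
  have hf : ∀ A ⊆ Icc (0:ℝ) 1, IntegrableOn (distribFun μ A f) (Ioi 0) :=
    fun A hA => integrableOn_distribFun_of_rpow hμ hmono hp.le (hfp A hA)
  obtain ⟨hx0, hx1⟩ := hx
  obtain ⟨hy0, hy1⟩ := hy
  have hIxy : Icc x y ⊆ Icc 0 1 := Icc_subset_Icc hx0 hy1
  rw [abs_of_nonneg (sub_nonneg.2 (choquet_mono_set hμ hmono hfpos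
    (Icc_subset_Icc le_rfl hxy) (hf _ (Icc_subset_Icc le_rfl hy1))))]
  calc choquet μ (Icc 0 y) f - choquet μ (Icc 0 x) f ≤ choquet μ (Icc x y) f := by
        rw [sub_le_iff_le_add', ← Icc_union_Icc_eq_Icc hx0 hxy]
        exact choquet_union_le hμ (union_le_add_of_submodular hμ hμsub) hfpos
          (hf _ (Icc_subset_Icc le_rfl hx1)) (hf _ hIxy)
    _ ≤ choquet μ (Icc x y) (fun t => f t ^ p) ^ (1/p) * μ (Icc x y) ^ (1/q) :=
        choquet_le_rpow_mul_rpow hμ hmono hconj hfpos (hfp _ hIxy)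
    _ ≤ choquet μ (Icc 0 1) (fun t => f t ^ p) ^ (1/p) * μ (Icc x y) ^ (1/q) := by
        have hfp_nonneg : ∀ t, 0 ≤ f t ^ p := fun t => Real.rpow_nonneg (hfpos t) p
        exact mul_le_mul_of_nonneg_right (Real.rpow_le_rpow (choquet_nonneg hμ hfp_nonneg)
          (choquet_mono_set hμ hmono hfp_nonneg hIxy hfint) (by positivity))
          (Real.rpow_nonneg (hμ _) _)

/-- Hölder-type estimate for the Volterra–Choquet operator: for `μ` monotone, submodular and
continuous from below on the Borel sets of `[0,1]`, `1 < p < ∞`, `1/p + 1/q = 1`,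
`0 ≤ x ≤ y ≤ 1` and `f ≥ 0` with `(C)∫_0^1 f^p dμ` finite,
`|V(f)(y) − V(f)(x)| ≤ ‖f‖_{L_{p,μ}} · μ([x,y])^{1/q}`. -/
theorem volterraChoquet_holder_estimate
    (μ : Set ℝ → ℝ) (hμ0 : μ ∅ = 0)
    (hμmono : ∀ A B : Set ℝ, A ⊆ B → μ A ≤ μ B)
    (hμsub : ∀ A B : Set ℝ, μ (A ∪ B) + μ (A ∩ B) ≤ μ A + μ B)
    (hμcb : ∀ A : ℕ → Set ℝ, (∀ k, MeasurableSet (A k)) → Monotone A →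
      Tendsto (fun k => μ (A k)) atTop (𝓝 (μ (⋃ k, A k))))
    (p q : ℝ) (hp : 1 < p) (hpq : 1/p + 1/q = 1)
    (f : ℝ → ℝ) (hfmeas : Measurable f) (hfpos : ∀ t, 0 ≤ f t)
    (hfint : IntegrableOn (fun β => μ ({t | β ≤ f t ^ p} ∩ Icc 0 1)) (Ioi (0:ℝ)))
    (x y : ℝ) (hx : x ∈ Icc (0:ℝ) 1) (hy : y ∈ Icc (0:ℝ) 1) (hxy : x ≤ y) :
    |choquet μ (Icc 0 y) f - choquet μ (Icc 0 x) f|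
      ≤ (choquet μ (Icc 0 1) (fun t => f t ^ p)) ^ (1/p) * μ (Icc x y) ^ (1/q) :=
  volterraChoquet_holder_estimate_general μ hμ0 hμmono hμsub p q hp hpq f hfpos hfint x y hx hy hxy
end

section
/- Let μ(A) = γ(m(A)) be a distorted Lebesgue measure (γ nondecreasing, concave, continuous, γ(0)=0) and 1 < p < ∞. Then the Volterra–Choquet operator V: L⁺_{p,μ}([0,1]) → C⁺[0,1], V(f)(x) = (C)∫_{[0,x]} f dμ, is a compact nonlinear operator: it is continuous (with respect to the L_{p,μ}-metric and the uniform norm) and maps bounded sets to relatively compact sets. -/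
open MeasureTheory Set Filter Topology

/-- Membership in `L⁺_{p,μ}([0,1])`: nonnegative, measurable, with finite Choquet `p`-norm. -/
def MemLpPlus (μ : Set ℝ → ℝ) (p : ℝ) (f : ℝ → ℝ) : Prop :=
  Measurable f ∧ (∀ t, 0 ≤ f t) ∧
    IntegrableOn (fun β => μ ({t | β ≤ f t ^ p} ∩ Icc 0 1)) (Ioi (0:ℝ))

/-!
`μ = γ ∘ volume` is monotone and subadditive on subsets of `[0,1]`, since a concave `γ` with
`γ 0 = 0` is subadditive. For `f ≥ 0`, `V f x = ∫_0^∞ μ({f ≥ β} ∩ [0,x]) dβ`, and the Chebyshev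
bound `μ{f ≥ β} ≤ ‖f‖ᵖ β⁻ᵖ` (the layer function of `fᵖ` is antitone) bounds the tail `∫_B^∞`
by `‖f‖ᵖ B^(1-p)/(p-1)`, uniformly on norm-bounded sets. Below the cutoff `B`, subadditivity
gives `μ({f ≥ β} ∩ [0,y]) ≤ μ({f ≥ β} ∩ [0,x]) + γ(y - x)` and
`μ{f ≥ β} ≤ μ{g ≥ β - t} + μ{|f - g| ≥ t}`. Hence `V f` has a modulus of continuity depending
only on `‖f‖`, `V f - V g` is uniformly small when `‖f - g‖` is, and Arzelà–Ascoli gives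
compactness.
-/

theorem ConcaveOn.mul_le_apply_mul {f : ℝ → ℝ} {s : Set ℝ} (hf : ConcaveOn ℝ s f)
    (h0s : 0 ∈ s) (h0 : 0 ≤ f 0) {x t : ℝ} (hx : x ∈ s) (ht₀ : 0 ≤ t) (ht₁ : t ≤ 1) :
    t * f x ≤ f (t * x) := by
  have h := hf.2 hx h0s ht₀ (sub_nonneg.2 ht₁) (add_sub_cancel t 1)
  simp only [smul_eq_mul, mul_zero, add_zero] at h
  nlinarith [mul_nonneg (sub_nonneg.2 ht₁) h0]

theorem ConcaveOn.le_add_of_le_add {γ : ℝ → ℝ} {r : ℝ} (hconc : ConcaveOn ℝ (Icc 0 r) γ)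
    (hmono : MonotoneOn γ (Icc 0 r)) (h0 : 0 ≤ γ 0) {a b c : ℝ} (ha : a ∈ Icc 0 r)
    (hb : b ∈ Icc 0 r) (hc : c ∈ Icc 0 r) (hcab : c ≤ a + b) : γ c ≤ γ a + γ b := by
  set s := min (a + b) r
  have hr : 0 ∈ Icc 0 r := left_mem_Icc.2 (ha.1.trans ha.2)
  have hs : s ∈ Icc 0 r := ⟨le_min (add_nonneg ha.1 hb.1) hr.2, min_le_right _ _⟩
  have hγs : 0 ≤ γ s := h0.trans (hmono hr hs hs.1)
  have hcs : γ c ≤ γ s := hmono hc hs (le_min hcab hc.2)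
  have has : a ≤ s := le_min (le_add_of_nonneg_right hb.1) ha.2
  have hbs : b ≤ s := le_min (le_add_of_nonneg_left ha.1) hb.2
  rcases hs.1.eq_or_lt with hs0 | hs0
  · rw [← hs0] at has hbs hcs
    rw [le_antisymm has ha.1, le_antisymm hbs hb.1]
    linarith
  have key : ∀ z ∈ Icc 0 r, z ≤ s → z / s * γ s ≤ γ z := fun z hz hzs => by
    simpa [div_mul_cancel₀ z hs0.ne'] using
      hconc.mul_le_apply_mul hr h0 hs (div_nonneg hz.1 hs0.le) ((div_le_one hs0).2 hzs)
  calc γ c ≤ γ s := hcs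
    _ ≤ (a + b) / s * γ s := le_mul_of_one_le_left hγs ((one_le_div hs0).2 (min_le_left _ _))
    _ = a / s * γ s + b / s * γ s := by ring
    _ ≤ γ a + γ b := add_le_add (key a ha has) (key b hb hbs)

structure IsSubmeasureOn {α : Type*} (μ : Set α → ℝ) (I : Set α) : Prop where
  empty : μ ∅ = 0
  mono : ∀ ⦃A B⦄, B ⊆ I → A ⊆ B → μ A ≤ μ B
  union_le : ∀ ⦃A B⦄, A ⊆ I → B ⊆ I → μ (A ∪ B) ≤ μ A + μ B

namespace IsSubmeasureOn

variable {α : Type*} {μ : Set α → ℝ} {I A B S : Set α}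

theorem nonneg (hμ : IsSubmeasureOn μ I) (hA : A ⊆ I) : 0 ≤ μ A :=
  hμ.empty ▸ hμ.mono hA (empty_subset A)

theorem le_add_of_subset_union (hμ : IsSubmeasureOn μ I) (hA : A ⊆ I) (hB : B ⊆ I)
    (hS : S ⊆ A ∪ B) : μ S ≤ μ A + μ B :=
  (hμ.mono (union_subset hA hB) hS).trans (hμ.union_le hA hB)

end IsSubmeasureOn

theorem toReal_volume_mem_Icc {A : Set ℝ} (hA : A ⊆ Icc 0 1) :
    (volume A).toReal ∈ Icc (0:ℝ) 1 := by
  refine ⟨ENNReal.toReal_nonneg, ENNReal.toReal_le_of_le_ofReal zero_le_one ?_⟩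
  simpa [Real.volume_Icc] using measure_mono (μ := volume) hA

theorem isSubmeasureOn_distortedVolume {γ : ℝ → ℝ} (hγmono : MonotoneOn γ (Icc 0 1))
    (hγconc : ConcaveOn ℝ (Icc 0 1) γ) (hγ0 : γ 0 = 0) :
    IsSubmeasureOn (fun A : Set ℝ => γ (volume A).toReal) (Icc 0 1) where
  empty := by simpa using hγ0
  mono A B hB hAB := hγmono (toReal_volume_mem_Icc (hAB.trans hB)) (toReal_volume_mem_Icc hB)
    (ENNReal.toReal_mono (measure_ne_top_of_subset hB measure_Icc_lt_top.ne)
      (measure_mono hAB))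
  union_le A B hA hB := hγconc.le_add_of_le_add hγmono hγ0.ge (toReal_volume_mem_Icc hA)
    (toReal_volume_mem_Icc hB) (toReal_volume_mem_Icc (union_subset hA hB))
    (ENNReal.toReal_le_add (measure_union_le A B)
      (measure_ne_top_of_subset hA measure_Icc_lt_top.ne)
      (measure_ne_top_of_subset hB measure_Icc_lt_top.ne))

section Antitone

variable {H : ℝ → ℝ}

theorem Antitone.mul_le_setIntegral_Ioi (hH : Antitone H) (h0 : ∀ u ∈ Ioi 0, 0 ≤ H u)
    (hint : IntegrableOn H (Ioi 0)) {s : ℝ} (hs : 0 ≤ s) : s * H s ≤ ∫ u in Ioi 0, H u :=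
  calc s * H s = ∫ _ in Ioc 0 s, H s := by simp [Real.volume_real_Ioc_of_le hs]
    _ ≤ ∫ u in Ioc 0 s, H u :=
      setIntegral_mono_on (integrableOn_const (by simp)) (hint.mono_set Ioc_subset_Ioi_self)
        measurableSet_Ioc fun u hu => hH hu.2
    _ ≤ ∫ u in Ioi 0, H u :=
      setIntegral_mono_set hint ((ae_restrict_iff' measurableSet_Ioi).2 (.of_forall h0))
        Ioc_subset_Ioi_self.eventuallyLE

theorem Antitone.integrableOn_Ioi_of_le_mul_rpow (hH : Antitone H)
    (h0 : ∀ u ∈ Ioi 0, 0 ≤ H u) {C p : ℝ} (hp : 1 < p)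
    (hC : ∀ u ∈ Ioi 0, H u ≤ C * u ^ (-p)) : IntegrableOn H (Ioi 0) := by
  rw [← Ioc_union_Ioi_eq_Ioi zero_le_one]
  refine ((hH.locallyIntegrable.integrableOn_isCompact isCompact_Icc).mono_set
    Ioc_subset_Icc_self).union ?_
  refine ((integrableOn_Ioi_rpow_of_lt (a := -p) (by linarith) one_pos).const_mul C).mono'
    hH.measurable.aestronglyMeasurable ((ae_restrict_iff' measurableSet_Ioi).2 (.of_forall ?_))
  intro u (hu : 1 < u)
  rw [Real.norm_of_nonneg (h0 u (zero_lt_one.trans hu))]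
  exact hC u (zero_lt_one.trans hu)

theorem setIntegral_Ioi_le_of_le_mul_rpow {C p B : ℝ} (hp : 1 < p) (hB : 0 < B)
    (hint : IntegrableOn H (Ioi B)) (hC : ∀ u ∈ Ioi B, H u ≤ C * u ^ (-p)) :
    ∫ u in Ioi B, H u ≤ C * B ^ (1 - p) / (p - 1) :=
  calc ∫ u in Ioi B, H u ≤ ∫ u in Ioi B, C * u ^ (-p) :=
        setIntegral_mono_on hint ((integrableOn_Ioi_rpow_of_lt (by linarith) hB).const_mul C)
          measurableSet_Ioi hC
    _ = C * B ^ (1 - p) / (p - 1) := by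
      rw [integral_const_mul, integral_Ioi_rpow_of_lt (by linarith) hB, neg_add_eq_sub,
        ← neg_sub p 1, div_neg, neg_div, neg_neg, mul_div_assoc]

theorem Antitone.intervalIntegral_comp_sub_le (hH : Antitone H) {t : ℝ} (ht : 0 ≤ t)
    (B : ℝ) : ∫ β in 0..B, H (β - t) ≤ t * (H (-t) - H B) + ∫ β in 0..B, H β := by
  have hi : ∀ a b : ℝ, IntervalIntegrable H volume a b := fun _ _ => hH.intervalIntegrable
  have hleft : ∫ β in -t..0, H β ≤ ∫ _ in -t..0, H (-t) :=
    intervalIntegral.integral_mono_on (by linarith) (hi _ _) intervalIntegrable_const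
      fun β hβ => hH hβ.1
  have hright : ∫ _ in B - t..B, H B ≤ ∫ β in B - t..B, H β :=
    intervalIntegral.integral_mono_on (by linarith) intervalIntegrable_const (hi _ _)
      fun β hβ => hH hβ.2
  simp only [intervalIntegral.integral_const, smul_eq_mul, sub_neg_eq_add, zero_add,
    sub_sub_cancel] at hleft hright
  rw [intervalIntegral.integral_comp_sub_right, zero_sub,
    ← intervalIntegral.integral_add_adjacent_intervals (hi (-t) 0) (hi 0 (B - t)),
    ← intervalIntegral.integral_add_adjacent_intervals (hi 0 (B - t)) (hi (B - t) B)]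
  linarith

end Antitone

theorem exists_pos_mul_rpow_div_lt {C p ε : ℝ} (hp : 1 < p) (hε : 0 < ε) :
    ∃ B > 0, C * B ^ (1 - p) / (p - 1) < ε := by
  have hlim : Tendsto (fun B : ℝ => C * B ^ (1 - p) / (p - 1)) atTop (𝓝 0) := by
    simpa [neg_sub] using
      ((tendsto_rpow_neg_atTop (y := p - 1) (by linarith)).const_mul C).div_const (p - 1)
  exact ((hlim.eventually_lt_const hε).and (eventually_gt_atTop 0)).exists.imp
    fun B hB => ⟨hB.2, hB.1⟩

def levelMeasure {α : Type*} (μ : Set α → ℝ) (A : Set α) (f : α → ℝ) (β : ℝ) : ℝ :=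
  μ ({ω | β ≤ f ω} ∩ A)

structure MemChoquetLp {α : Type*} (μ : Set α → ℝ) (I : Set α) (p : ℝ) (f : α → ℝ) : Prop where
  nonneg : ∀ ω, 0 ≤ f ω
  integrableOn : IntegrableOn (levelMeasure μ I fun ω => f ω ^ p) (Ioi 0)

section Choquet

variable {α : Type*} {μ : Set α → ℝ} {I A A' : Set α} {f g h : α → ℝ} {p : ℝ}

theorem choquet_eq_setIntegral_levelMeasure (hf : ∀ ω, 0 ≤ f ω) :
    choquet μ A f = ∫ β in Ioi 0, levelMeasure μ A f β := by
  have hA : ∀ β < 0, {ω | β ≤ f ω} ∩ A = A := fun β hβ =>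
    inter_eq_self_of_subset_right fun ω _ => hβ.le.trans (hf ω)
  rw [choquet, setIntegral_congr_fun measurableSet_Iio (fun β hβ => by rw [hA β hβ, sub_self]),
    integral_zero, add_zero]
  rfl

theorem levelMeasure_rpow (hf : ∀ ω, 0 ≤ f ω) (hp : 0 < p) {β : ℝ} (hβ : 0 < β) :
    levelMeasure μ A f β = levelMeasure μ A (fun ω => f ω ^ p) (β ^ p) := by
  simp only [levelMeasure, Real.rpow_le_rpow_iff hβ.le (hf _) hp]

variable (hμ : IsSubmeasureOn μ I)
include hμ

theorem levelMeasure_nonneg (hA : A ⊆ I) (β : ℝ) : 0 ≤ levelMeasure μ A f β :=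
  hμ.nonneg (inter_subset_right.trans hA)

theorem levelMeasure_le (hA : A ⊆ I) (β : ℝ) : levelMeasure μ A f β ≤ μ A :=
  hμ.mono hA inter_subset_right

theorem levelMeasure_antitone (hA : A ⊆ I) : Antitone (levelMeasure μ A f) :=
  fun _ _ hβ => hμ.mono (inter_subset_right.trans hA)
    (inter_subset_inter_left _ fun _ h => hβ.trans h)

theorem levelMeasure_mono_set (hAA' : A ⊆ A') (hA' : A' ⊆ I) (β : ℝ) :
    levelMeasure μ A f β ≤ levelMeasure μ A' f β :=
  hμ.mono (inter_subset_right.trans hA') (inter_subset_inter_right _ hAA')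

theorem choquet_nonneg_s10 (hA : A ⊆ I) (hf : ∀ ω, 0 ≤ f ω) : 0 ≤ choquet μ A f := by
  rw [choquet_eq_setIntegral_levelMeasure hf]
  exact setIntegral_nonneg measurableSet_Ioi fun β _ => levelMeasure_nonneg hμ hA β

theorem levelMeasure_le_mul_rpow (hA : A ⊆ I) (hp : 0 < p) (hf : MemChoquetLp μ I p f)
    {β : ℝ} (hβ : 0 < β) :
    levelMeasure μ A f β ≤ choquet μ I (fun ω => f ω ^ p) * β ^ (-p) := by
  have hβp : 0 < β ^ p := Real.rpow_pos_of_pos hβ p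
  have hmarkov := (levelMeasure_antitone hμ subset_rfl).mul_le_setIntegral_Ioi
    (fun s _ => levelMeasure_nonneg hμ subset_rfl s) hf.integrableOn hβp.le
  rw [← choquet_eq_setIntegral_levelMeasure fun ω => Real.rpow_nonneg (hf.nonneg ω) p,
    ← levelMeasure_rpow hf.nonneg hp hβ] at hmarkov
  rw [Real.rpow_neg hβ.le, ← div_eq_mul_inv, le_div_iff₀ hβp, mul_comm]
  exact (mul_le_mul_of_nonneg_left (levelMeasure_mono_set hμ hA subset_rfl β) hβp.le).trans
    hmarkov

theorem integrableOn_levelMeasure (hA : A ⊆ I) (hp : 1 < p) (hf : MemChoquetLp μ I p f) :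
    IntegrableOn (levelMeasure μ A f) (Ioi 0) :=
  (levelMeasure_antitone hμ hA).integrableOn_Ioi_of_le_mul_rpow
    (fun β _ => levelMeasure_nonneg hμ hA β) hp
    fun _ hβ => levelMeasure_le_mul_rpow hμ hA (by linarith) hf hβ

theorem setIntegral_Ioi_levelMeasure_le (hA : A ⊆ I) (hp : 1 < p) (hf : MemChoquetLp μ I p f)
    {B : ℝ} (hB : 0 < B) :
    ∫ β in Ioi B, levelMeasure μ A f β
      ≤ choquet μ I (fun ω => f ω ^ p) * B ^ (1 - p) / (p - 1) :=
  setIntegral_Ioi_le_of_le_mul_rpow hp hB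
    ((integrableOn_levelMeasure hμ hA hp hf).mono_set (Ioi_subset_Ioi hB.le))
    fun _ hβ => levelMeasure_le_mul_rpow hμ hA (by linarith) hf (hB.trans hβ)

theorem choquet_eq_intervalIntegral_add (hA : A ⊆ I) (hp : 1 < p) (hf : MemChoquetLp μ I p f)
    {B : ℝ} (hB : 0 ≤ B) :
    choquet μ A f = (∫ β in 0..B, levelMeasure μ A f β) + ∫ β in Ioi B, levelMeasure μ A f β := by
  have hint := integrableOn_levelMeasure hμ hA hp hf
  rw [intervalIntegral.integral_interval_add_Ioi hint (hint.mono_set (Ioi_subset_Ioi hB)),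
    choquet_eq_setIntegral_levelMeasure hf.nonneg]

theorem intervalIntegral_levelMeasure_le_choquet (hA : A ⊆ I) (hp : 1 < p)
    (hf : MemChoquetLp μ I p f) {B : ℝ} (hB : 0 ≤ B) :
    ∫ β in 0..B, levelMeasure μ A f β ≤ choquet μ A f := by
  rw [choquet_eq_intervalIntegral_add hμ hA hp hf hB, le_add_iff_nonneg_right]
  exact setIntegral_nonneg measurableSet_Ioi fun β _ => levelMeasure_nonneg hμ hA β

theorem choquet_mem_Icc (hA : A ⊆ I) (hp : 1 < p) (hf : MemChoquetLp μ I p f) {C : ℝ}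
    (hC : choquet μ I (fun ω => f ω ^ p) ≤ C) : choquet μ A f ∈ Icc 0 (μ I + C / (p - 1)) := by
  have hhead : ∫ β in (0:ℝ)..1, levelMeasure μ A f β ≤ ∫ _ in (0:ℝ)..1, μ A :=
    intervalIntegral.integral_mono_on zero_le_one (levelMeasure_antitone hμ hA).intervalIntegrable
      intervalIntegrable_const fun β _ => levelMeasure_le hμ hA β
  have htail := setIntegral_Ioi_levelMeasure_le hμ hA hp hf one_pos
  rw [Real.one_rpow, mul_one] at htail
  simp only [intervalIntegral.integral_const, sub_zero, one_smul] at hhead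
  have hCp : choquet μ I (fun ω => f ω ^ p) / (p - 1) ≤ C / (p - 1) :=
    div_le_div_of_nonneg_right hC (by linarith)
  refine ⟨choquet_nonneg_s10 hμ hA hf.nonneg, ?_⟩
  rw [choquet_eq_intervalIntegral_add hμ hA hp hf zero_le_one]
  linarith [hμ.mono subset_rfl hA]

theorem choquet_le_choquet_add_of_subset (hAA' : A ⊆ A') (hA' : A' ⊆ I) (hp : 1 < p)
    (hf : MemChoquetLp μ I p f) {B : ℝ} (hB : 0 ≤ B) :
    choquet μ A' f ≤ choquet μ A f + B * μ (A' \ A) + ∫ β in Ioi B, levelMeasure μ A' f β := by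
  have hA := hAA'.trans hA'
  have hhead : ∫ β in 0..B, levelMeasure μ A' f β
      ≤ ∫ β in 0..B, (levelMeasure μ A f β + μ (A' \ A)) :=
    intervalIntegral.integral_mono_on hB (levelMeasure_antitone hμ hA').intervalIntegrable
      ((levelMeasure_antitone hμ hA).intervalIntegrable.add intervalIntegrable_const)
      fun β _ => hμ.le_add_of_subset_union (inter_subset_right.trans hA)
        (sdiff_subset.trans hA') fun ω ⟨hωf, hωA'⟩ =>
          (em (ω ∈ A)).imp (fun hωA => ⟨hωf, hωA⟩) fun hωA => ⟨hωA', hωA⟩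
  rw [intervalIntegral.integral_add (levelMeasure_antitone hμ hA).intervalIntegrable
    intervalIntegrable_const, intervalIntegral.integral_const, sub_zero, smul_eq_mul] at hhead
  have := intervalIntegral_levelMeasure_le_choquet hμ hA hp hf hB
  rw [choquet_eq_intervalIntegral_add hμ hA' hp hf hB]
  linarith

theorem choquet_mono_set_s10 (hAA' : A ⊆ A') (hA' : A' ⊆ I) (hp : 1 < p)
    (hf : MemChoquetLp μ I p f) : choquet μ A f ≤ choquet μ A' f := by
  rw [choquet_eq_setIntegral_levelMeasure hf.nonneg,
    choquet_eq_setIntegral_levelMeasure hf.nonneg]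
  exact setIntegral_mono (integrableOn_levelMeasure hμ (hAA'.trans hA') hp hf)
    (integrableOn_levelMeasure hμ hA' hp hf) (levelMeasure_mono_set hμ hAA' hA')

theorem levelMeasure_add_le (hA : A ⊆ I) (hfgh : ∀ ω, f ω ≤ g ω + h ω) (a b : ℝ) :
    levelMeasure μ A f (a + b) ≤ levelMeasure μ A g a + levelMeasure μ I h b := by
  refine hμ.le_add_of_subset_union (inter_subset_right.trans hA) inter_subset_right ?_
  rintro ω ⟨hω : a + b ≤ f ω, hωA⟩
  by_cases hg : a ≤ g ω
  · exact .inl ⟨hg, hωA⟩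
  · exact .inr ⟨show b ≤ h ω by linarith [hfgh ω], hA hωA⟩

theorem levelMeasure_le_add_of_le_max (hA : A ⊆ I) (hfgh : ∀ ω, f ω ≤ max (g ω) (h ω))
    (β : ℝ) : levelMeasure μ A f β ≤ levelMeasure μ A g β + levelMeasure μ A h β := by
  refine hμ.le_add_of_subset_union (inter_subset_right.trans hA)
    (inter_subset_right.trans hA) ?_
  rintro ω ⟨hω : β ≤ f ω, hωA⟩
  rcases le_max_iff.1 (hω.trans (hfgh ω)) with hg | hh
  exacts [.inl ⟨hg, hωA⟩, .inr ⟨hh, hωA⟩]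

theorem MemChoquetLp.abs_sub (hp : 0 < p) (hf : MemChoquetLp μ I p f)
    (hg : MemChoquetLp μ I p g) : MemChoquetLp μ I p fun ω => |f ω - g ω| := by
  refine ⟨fun ω => abs_nonneg _, (hf.integrableOn.add hg.integrableOn).mono'
    (levelMeasure_antitone hμ subset_rfl).measurable.aestronglyMeasurable (.of_forall ?_)⟩
  intro s
  rw [Real.norm_of_nonneg (levelMeasure_nonneg hμ subset_rfl s)]
  refine levelMeasure_le_add_of_le_max hμ subset_rfl (fun ω => ?_) s
  have hmax : |f ω - g ω| ≤ max (f ω) (g ω) := abs_sub_le_iff.2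
    ⟨by linarith [le_max_left (f ω) (g ω), hg.nonneg ω],
      by linarith [le_max_right (f ω) (g ω), hf.nonneg ω]⟩
  rcases max_choice (f ω) (g ω) with h | h <;> rw [h] at hmax
  · exact le_max_of_le_left (Real.rpow_le_rpow (abs_nonneg _) hmax hp.le)
  · exact le_max_of_le_right (Real.rpow_le_rpow (abs_nonneg _) hmax hp.le)

/-- The layer comparison `{f ≥ β} ⊆ {g ≥ β - t} ∪ {|f - g| ≥ t}`, integrated over `β ≤ B`. -/
theorem choquet_le_choquet_add (hA : A ⊆ I) (hp : 1 < p) (hf : MemChoquetLp μ I p f)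
    (hg : MemChoquetLp μ I p g) {t B : ℝ} (ht : 0 ≤ t) (hB : 0 ≤ B) :
    choquet μ A f ≤ choquet μ A g + t * μ A
      + B * levelMeasure μ I (fun ω => |f ω - g ω|) t + ∫ β in Ioi B, levelMeasure μ A f β := by
  set D := levelMeasure μ I (fun ω => |f ω - g ω|) t
  have hGg := levelMeasure_antitone (f := g) hμ hA
  have hGg_shift : Antitone fun β => levelMeasure μ A g (β - t) :=
    fun _ _ h => hGg (sub_le_sub_right h t)
  have hhead : ∫ β in 0..B, levelMeasure μ A f β
      ≤ ∫ β in 0..B, (levelMeasure μ A g (β - t) + D) :=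
    intervalIntegral.integral_mono_on hB (levelMeasure_antitone hμ hA).intervalIntegrable
      (hGg_shift.intervalIntegrable.add intervalIntegrable_const) fun β _ => by
        simpa using levelMeasure_add_le hμ hA (h := fun ω => |f ω - g ω|)
          (fun ω => by linarith [le_abs_self (f ω - g ω)]) (β - t) t
  rw [intervalIntegral.integral_add hGg_shift.intervalIntegrable intervalIntegrable_const,
    intervalIntegral.integral_const, sub_zero, smul_eq_mul] at hhead
  have hosc : levelMeasure μ A g (-t) - levelMeasure μ A g B ≤ μ A := by
    linarith [levelMeasure_le (f := g) hμ hA (-t), levelMeasure_nonneg (f := g) hμ hA B]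
  rw [choquet_eq_intervalIntegral_add hμ hA hp hf hB]
  linarith [hGg.intervalIntegral_comp_sub_le ht B, mul_le_mul_of_nonneg_left hosc ht,
    intervalIntegral_levelMeasure_le_choquet hμ hA hp hg hB]

theorem abs_choquet_sub_le (hA : A ⊆ I) (hp : 1 < p) (hf : MemChoquetLp μ I p f)
    (hg : MemChoquetLp μ I p g) {t B : ℝ} (ht : 0 < t) (hB : 0 < B) :
    |choquet μ A f - choquet μ A g|
      ≤ t * μ I + B * (choquet μ I (fun ω => |f ω - g ω| ^ p) * t ^ (-p))
        + 2 ^ p * (choquet μ I (fun ω => f ω ^ p) + choquet μ I (fun ω => |f ω - g ω| ^ p))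
          * B ^ (1 - p) / (p - 1) := by
  have hp0 : 0 < p := by linarith
  set Nf := choquet μ I (fun ω => f ω ^ p)
  set Nd := choquet μ I (fun ω => |f ω - g ω| ^ p)
  have hd := hf.abs_sub hμ hp0 hg
  have hNf : 0 ≤ Nf := choquet_nonneg_s10 hμ subset_rfl fun ω => Real.rpow_nonneg (hf.nonneg ω) p
  have hNd : 0 ≤ Nd := choquet_nonneg_s10 hμ subset_rfl fun ω => Real.rpow_nonneg (hd.nonneg ω) p
  have hD : B * levelMeasure μ I (fun ω => |f ω - g ω|) t ≤ B * (Nd * t ^ (-p)) :=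
    mul_le_mul_of_nonneg_left (levelMeasure_le_mul_rpow hμ subset_rfl hp0 hd ht) hB.le
  have htμ : t * μ A ≤ t * μ I := mul_le_mul_of_nonneg_left (hμ.mono subset_rfl hA) ht.le
  have hcoef : Nf * B ^ (1 - p) / (p - 1) ≤ 2 ^ p * (Nf + Nd) * B ^ (1 - p) / (p - 1) := by
    have : Nf ≤ 2 ^ p * (Nf + Nd) := by
      nlinarith [Real.one_le_rpow one_le_two hp0.le]
    gcongr
  have htail_f := setIntegral_Ioi_levelMeasure_le hμ hA hp hf hB
  -- `g ≤ f + |f - g|` splits `{g ≥ β}` into `{f ≥ β/2} ∪ {|f - g| ≥ β/2}`.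
  have htail_g :
      ∫ β in Ioi B, levelMeasure μ A g β ≤ 2 ^ p * (Nf + Nd) * B ^ (1 - p) / (p - 1) := by
    refine setIntegral_Ioi_le_of_le_mul_rpow hp hB
      ((integrableOn_levelMeasure hμ hA hp hg).mono_set (Ioi_subset_Ioi hB.le)) fun β hβ => ?_
    have hβ2 : 0 < β / 2 := by linarith [hB.trans hβ]
    calc levelMeasure μ A g β = levelMeasure μ A g (β / 2 + β / 2) := by rw [add_halves]
      _ ≤ levelMeasure μ A f (β / 2) + levelMeasure μ I (fun ω => |f ω - g ω|) (β / 2) :=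
        levelMeasure_add_le hμ hA (fun ω => by linarith [neg_abs_le (f ω - g ω)]) _ _
      _ ≤ Nf * (β / 2) ^ (-p) + Nd * (β / 2) ^ (-p) :=
        add_le_add (levelMeasure_le_mul_rpow hμ hA hp0 hf hβ2)
          (levelMeasure_le_mul_rpow hμ subset_rfl hp0 hd hβ2)
      _ = 2 ^ p * (Nf + Nd) * β ^ (-p) := by
        rw [Real.div_rpow (hB.trans hβ).le zero_le_two, Real.rpow_neg zero_le_two,
          div_inv_eq_mul]
        ring
  have hgf : (fun ω => |g ω - f ω|) = fun ω => |f ω - g ω| := funext fun ω => abs_sub_comm _ _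
  have hfg_le := choquet_le_choquet_add hμ hA hp hf hg ht.le hB.le
  have hgf_le := choquet_le_choquet_add hμ hA hp hg hf ht.le hB.le
  rw [hgf] at hgf_le
  rw [abs_sub_le_iff]
  constructor <;> linarith

theorem exists_forall_abs_choquet_sub_lt (hp : 1 < p) (hf : MemChoquetLp μ I p f) {ε : ℝ}
    (hε : 0 < ε) :
    ∃ η > 0, ∀ g, MemChoquetLp μ I p g → choquet μ I (fun ω => |f ω - g ω| ^ p) < η →
      ∀ A ⊆ I, |choquet μ A f - choquet μ A g| < ε := by
  set Nf := choquet μ I (fun ω => f ω ^ p)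
  have hM : 0 ≤ μ I := hμ.nonneg subset_rfl
  obtain ⟨B, hB, htail⟩ :=
    exists_pos_mul_rpow_div_lt (C := 2 ^ p * Nf) hp (by linarith : 0 < ε / 4)
  set t := ε / (4 * (μ I + 1))
  have ht : 0 < t := by positivity
  have htM : t * μ I < ε / 4 := by
    rw [div_mul_eq_mul_div, div_lt_div_iff₀ (by positivity) (by norm_num)]
    nlinarith
  -- `b` is the slope of the bound of `abs_choquet_sub_le`, affine in `‖f - g‖ᵖ`.
  set b := B * t ^ (-p) + 2 ^ p * B ^ (1 - p) / (p - 1)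
  have hb : 0 ≤ b := by
    have : 0 < p - 1 := by linarith
    positivity
  refine ⟨ε / (2 * (b + 1)), by positivity, fun g hg hfg A hA => ?_⟩
  set Nd := choquet μ I (fun ω => |f ω - g ω| ^ p)
  have hbNd : b * Nd < ε / 2 := by
    calc b * Nd ≤ b * (ε / (2 * (b + 1))) := mul_le_mul_of_nonneg_left hfg.le hb
      _ < ε / 2 := by
        rw [mul_div_assoc', div_lt_div_iff₀ (by positivity) (by norm_num)]
        nlinarith
  calc |choquet μ A f - choquet μ A g|
      ≤ t * μ I + B * (Nd * t ^ (-p)) + 2 ^ p * (Nf + Nd) * B ^ (1 - p) / (p - 1) :=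
        abs_choquet_sub_le hμ hA hp hf hg ht hB
    _ = t * μ I + 2 ^ p * Nf * B ^ (1 - p) / (p - 1) + b * Nd := by ring
    _ < ε := by linarith

end Choquet

section UnitInterval

variable {μ : Set ℝ → ℝ} {ω : ℝ → ℝ} {f : ℝ → ℝ} {p : ℝ}

theorem abs_choquet_Icc_sub_le (hμ : IsSubmeasureOn μ (Icc 0 1))
    (hμω : ∀ x y, 0 ≤ x → x ≤ y → y ≤ 1 → μ (Icc x y) ≤ ω (y - x)) (hp : 1 < p)
    (hf : MemChoquetLp μ (Icc 0 1) p f) {B : ℝ} (hB : 0 < B) {x y : ℝ} (hx : x ∈ Icc 0 1)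
    (hy : y ∈ Icc 0 1) :
    |choquet μ (Icc 0 x) f - choquet μ (Icc 0 y) f|
      ≤ B * ω |x - y| + choquet μ (Icc 0 1) (fun t => f t ^ p) * B ^ (1 - p) / (p - 1) := by
  wlog hxy : x ≤ y generalizing x y
  · rw [abs_sub_comm, abs_sub_comm x]
    exact this hy hx (le_of_not_ge hxy)
  have hsub : Icc 0 x ⊆ Icc 0 y := Icc_subset_Icc_right hxy
  have hy1 : Icc 0 y ⊆ Icc 0 1 := Icc_subset_Icc_right hy.2
  have hdiff : μ (Icc 0 y \ Icc 0 x) ≤ ω |x - y| := by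
    rw [abs_sub_comm, abs_of_nonneg (sub_nonneg.2 hxy)]
    have : Icc 0 y \ Icc 0 x ⊆ Icc x y := fun t ht =>
      ⟨(not_le.1 fun h => ht.2 ⟨ht.1.1, h⟩).le, ht.1.2⟩
    exact (hμ.mono (Icc_subset_Icc hx.1 hy.2) this).trans (hμω x y hx.1 hxy hy.2)
  rw [abs_sub_comm, abs_of_nonneg (sub_nonneg.2 (choquet_mono_set_s10 hμ hsub hy1 hp hf))]
  linarith [choquet_le_choquet_add_of_subset hμ hsub hy1 hp hf hB.le,
    setIntegral_Ioi_levelMeasure_le hμ hy1 hp hf hB,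
    mul_le_mul_of_nonneg_left hdiff hB.le]

theorem uniformEquicontinuousOn_choquet_Icc {ι : Type*} {u : ι → ℝ → ℝ}
    (hμ : IsSubmeasureOn μ (Icc 0 1)) (hω : Tendsto ω (𝓝[≥] 0) (𝓝 0))
    (hμω : ∀ x y, 0 ≤ x → x ≤ y → y ≤ 1 → μ (Icc x y) ≤ ω (y - x)) (hp : 1 < p)
    (hu : ∀ i, MemChoquetLp μ (Icc 0 1) p (u i)) {C : ℝ}
    (hC : ∀ i, choquet μ (Icc 0 1) (fun t => u i t ^ p) ≤ C) :
    UniformEquicontinuousOn (fun i x => choquet μ (Icc 0 x) (u i)) (Icc 0 1) := by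
  rw [← uniformEquicontinuous_restrict_iff, Metric.uniformEquicontinuous_iff]
  intro ε hε
  obtain ⟨B, hB, htail⟩ := exists_pos_mul_rpow_div_lt (C := C) hp (half_pos hε)
  obtain ⟨δ, hδ, hωδ⟩ := mem_nhdsGE_iff_exists_Ico_subset.1
    (hω.eventually (gt_mem_nhds (by positivity : 0 < ε / (2 * B))))
  refine ⟨δ, hδ, fun x y hxy i => ?_⟩
  have hωxy : ω |x.1 - y.1| < ε / (2 * B) := hωδ ⟨abs_nonneg _, hxy⟩
  have hCi : choquet μ (Icc 0 1) (fun t => u i t ^ p) * B ^ (1 - p) / (p - 1)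
      ≤ C * B ^ (1 - p) / (p - 1) := by
    have : 0 < p - 1 := by linarith
    gcongr
    exact hC i
  calc dist (choquet μ (Icc 0 x.1) (u i)) (choquet μ (Icc 0 y.1) (u i))
      ≤ B * ω |x.1 - y.1| + choquet μ (Icc 0 1) (fun t => u i t ^ p) * B ^ (1 - p) / (p - 1) :=
        abs_choquet_Icc_sub_le hμ hμω hp (hu i) hB x.2 y.2
    _ < B * (ε / (2 * B)) + ε / 2 := by linarith [mul_lt_mul_of_pos_left hωxy hB]
    _ = ε := by field_simp; ring

end UnitInterval

open BoundedContinuousFunction in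
theorem IsCompact.exists_subseq_tendstoUniformlyOn {X β : Type*} [TopologicalSpace X]
    [MetricSpace β] {K : Set X} (hK : IsCompact K) {F : ℕ → X → β}
    (hF : EquicontinuousOn F K) {Q : Set β} (hQ : IsCompact Q)
    (hFQ : ∀ n, ∀ x ∈ K, F n x ∈ Q) :
    ∃ (h : X → β) (φ : ℕ → ℕ), StrictMono φ ∧
      TendstoUniformlyOn (fun n => F (φ n)) h atTop K := by
  have := isCompact_iff_compactSpace.1 hK
  let g : ℕ → K →ᵇ β := fun n =>
    .mkOfCompact ⟨K.domRestrict (F n), (hF.continuousOn n).domRestrict⟩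
  have hg : Equicontinuous ((↑) : range g → K → β) := by
    convert ((equicontinuous_restrict_iff F).2 hF).comp fun i : range g => i.2.choose with i
    exact congrArg _ i.2.choose_spec.symm
  obtain ⟨glim, -, φ, hφ, hlim⟩ := (arzela_ascoli Q hQ (range g)
    (by rintro _ x ⟨n, rfl⟩; exact hFQ n x x.2) hg).tendsto_subseq
    (fun n => subset_closure (mem_range_self n))
  classical
  refine ⟨fun x => if hx : x ∈ K then glim ⟨x, hx⟩ else F 0 x, φ, hφ, ?_⟩
  rw [tendstoUniformlyOn_iff_tendstoUniformly_comp_coe]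
  convert tendsto_iff_tendstoUniformly.1 hlim
  · rfl
  · exact funext fun x => dif_pos x.2

theorem volterraChoquet_compact_Lp_general (γ : ℝ → ℝ)
    (hγmono : MonotoneOn γ (Icc 0 1)) (hγconc : ConcaveOn ℝ (Icc 0 1) γ)
    (hγcont : ContinuousOn γ (Icc 0 1)) (hγ0 : γ 0 = 0)
    (p : ℝ) (hp : 1 < p) :
    (∀ f : ℝ → ℝ, MemLpPlus (fun A => γ (volume A).toReal) p f →
      (ContinuousOn (fun x => choquet (fun A => γ (volume A).toReal) (Icc 0 x) f)
          (Icc 0 1) ∧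
        ∀ x ∈ Icc (0:ℝ) 1,
          0 ≤ choquet (fun A => γ (volume A).toReal) (Icc 0 x) f)) ∧
    (∀ f : ℝ → ℝ, MemLpPlus (fun A => γ (volume A).toReal) p f →
      ∀ ε > (0:ℝ), ∃ δ > (0:ℝ), ∀ g : ℝ → ℝ,
        MemLpPlus (fun A => γ (volume A).toReal) p g →
        (choquet (fun A => γ (volume A).toReal) (Icc 0 1)
            (fun t => |f t - g t| ^ p)) ^ (1/p) < δ →
        ∀ x ∈ Icc (0:ℝ) 1,
          |choquet (fun A => γ (volume A).toReal) (Icc 0 x) f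
            - choquet (fun A => γ (volume A).toReal) (Icc 0 x) g| < ε) ∧
    (∀ R : ℝ, ∀ u : ℕ → ℝ → ℝ,
      (∀ n, MemLpPlus (fun A => γ (volume A).toReal) p (u n)) →
      (∀ n, (choquet (fun A => γ (volume A).toReal) (Icc 0 1)
          (fun t => u n t ^ p)) ^ (1/p) ≤ R) →
      ∃ (h : ℝ → ℝ) (φ : ℕ → ℕ), StrictMono φ ∧
        TendstoUniformlyOn
          (fun n x => choquet (fun A => γ (volume A).toReal) (Icc 0 x) (u (φ n)))
          h atTop (Icc 0 1)) := by
  have hμ := isSubmeasureOn_distortedVolume hγmono hγconc hγ0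
  have hω : Tendsto γ (𝓝[≥] 0) (𝓝 0) := by
    simpa [ContinuousWithinAt, hγ0, nhdsWithin_Icc_eq_nhdsGE zero_lt_one] using
      hγcont 0 (left_mem_Icc.2 zero_le_one)
  have hμω (x y : ℝ) (_ : 0 ≤ x) (hxy : x ≤ y) (_ : y ≤ 1) :
      γ (volume (Icc x y)).toReal ≤ γ (y - x) := by
    rw [Real.volume_Icc, ENNReal.toReal_ofReal (sub_nonneg.2 hxy)]
  have hmem {f : ℝ → ℝ} (hf : MemLpPlus (fun A => γ (volume A).toReal) p f) :
      MemChoquetLp (fun A => γ (volume A).toReal) (Icc 0 1) p f := ⟨hf.2.1, hf.2.2⟩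
  refine ⟨fun f hf => ⟨?_, fun x hx => choquet_nonneg_s10 hμ (Icc_subset_Icc_right hx.2) hf.2.1⟩,
    fun f hf ε hε => ?_, fun R u hu hR => ?_⟩
  · exact (uniformEquicontinuousOn_choquet_Icc hμ hω hμω hp (u := fun _ : Unit => f)
      (fun _ => hmem hf) fun _ => le_rfl).equicontinuousOn.continuousOn ()
  · obtain ⟨η, hη, hclose⟩ := exists_forall_abs_choquet_sub_lt hμ hp (hmem hf) hε
    refine ⟨η ^ (1 / p), by positivity, fun g hg hfg x hx =>
      hclose g (hmem hg) ?_ _ (Icc_subset_Icc_right hx.2)⟩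
    rwa [Real.rpow_lt_rpow_iff (choquet_nonneg_s10 hμ subset_rfl fun t => by positivity) hη.le
      (by positivity)] at hfg
  · have hN (n : ℕ) : choquet (fun A => γ (volume A).toReal) (Icc 0 1) (fun t => u n t ^ p)
        ≤ R ^ p := by
      have hNn := choquet_nonneg_s10 hμ subset_rfl fun t => Real.rpow_nonneg ((hu n).2.1 t) p
      rw [one_div] at hR
      exact (Real.rpow_inv_le_iff_of_pos hNn ((Real.rpow_nonneg hNn _).trans (hR n))
        (by linarith)).1 (hR n)
    exact isCompact_Icc.exists_subseq_tendstoUniformlyOn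
      (uniformEquicontinuousOn_choquet_Icc hμ hω hμω hp (fun n => hmem (hu n)) hN).equicontinuousOn
      isCompact_Icc fun n x hx =>
        choquet_mem_Icc hμ (Icc_subset_Icc_right hx.2) hp (hmem (hu n)) (hN n)

/-- The Volterra–Choquet operator `V(f)(x) = (C)∫_{[0,x]} f dμ` for a distorted Lebesgue
measure `μ(A) = γ(m(A))` (`γ` nondecreasing, concave, continuous, `γ(0)=0`) and
`1 < p < ∞` is a compact nonlinear operator from `L⁺_{p,μ}([0,1])` into `C⁺[0,1]`:
each `V(f)` is continuous and nonnegative, `V` is continuous from the `L_{p,μ}`-metric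
to the uniform norm, and the image of any norm-bounded set is relatively compact, i.e.
every sequence with bounded `L_{p,μ}`-norms has a subsequence whose image under `V`
converges uniformly on `[0,1]`. -/
theorem volterraChoquet_compact_Lp (γ : ℝ → ℝ)
    (hγmono : MonotoneOn γ (Icc 0 1)) (hγconc : ConcaveOn ℝ (Icc 0 1) γ)
    (hγcont : ContinuousOn γ (Icc 0 1)) (hγ0 : γ 0 = 0)
    (p q : ℝ) (hp : 1 < p) (hpq : 1/p + 1/q = 1) :
    (∀ f : ℝ → ℝ, MemLpPlus (fun A => γ (volume A).toReal) p f →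
      (ContinuousOn (fun x => choquet (fun A => γ (volume A).toReal) (Icc 0 x) f)
          (Icc 0 1) ∧
        ∀ x ∈ Icc (0:ℝ) 1,
          0 ≤ choquet (fun A => γ (volume A).toReal) (Icc 0 x) f)) ∧
    (∀ f : ℝ → ℝ, MemLpPlus (fun A => γ (volume A).toReal) p f →
      ∀ ε > (0:ℝ), ∃ δ > (0:ℝ), ∀ g : ℝ → ℝ,
        MemLpPlus (fun A => γ (volume A).toReal) p g →
        (choquet (fun A => γ (volume A).toReal) (Icc 0 1)
            (fun t => |f t - g t| ^ p)) ^ (1/p) < δ →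
        ∀ x ∈ Icc (0:ℝ) 1,
          |choquet (fun A => γ (volume A).toReal) (Icc 0 x) f
            - choquet (fun A => γ (volume A).toReal) (Icc 0 x) g| < ε) ∧
    (∀ R : ℝ, ∀ u : ℕ → ℝ → ℝ,
      (∀ n, MemLpPlus (fun A => γ (volume A).toReal) p (u n)) →
      (∀ n, (choquet (fun A => γ (volume A).toReal) (Icc 0 1)
          (fun t => u n t ^ p)) ^ (1/p) ≤ R) →
      ∃ (h : ℝ → ℝ) (φ : ℕ → ℕ), StrictMono φ ∧
        TendstoUniformlyOn
          (fun n x => choquet (fun A => γ (volume A).toReal) (Icc 0 x) (u (φ n)))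
          h atTop (Icc 0 1)) :=
  volterraChoquet_compact_Lp_general γ hγmono hγconc hγcont hγ0 p hp
end

section
/- Let μ be a monotone, submodular, continuous-from-below-and-above set function on the Borel subsets of [0,1] and 1 < p < ∞. Then V maps L_{p,μ}([0,1]) into itself and ‖V(f) − V(g)‖_{L_{p,μ}} ≤ μ([0,1]) · ‖f − g‖_{L_{p,μ}} for all f, g ∈ L_{p,μ}([0,1]). -/
open MeasureTheory Set Filter Topology

/-- Membership in `L_{p,μ}([0,1])`: measurable with `(C)∫_0^1 |f|^p dμ < ∞`
(finiteness expressed as integrability of the layer function). -/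
def MemLp (μ : Set ℝ → ℝ) (p : ℝ) (f : ℝ → ℝ) : Prop :=
  Measurable f ∧
    IntegrableOn (fun β => μ ({t | β ≤ |f t| ^ p} ∩ Icc 0 1)) (Ioi (0:ℝ))

/-!
The Choquet integral over `A` is `∫ layer μ A u` (plus a correction on the negative half-line),
where `layer μ A u β = μ ({u ≥ β} ∩ A)`. By submodularity, adding `c • 1_B` to a function raises
each layer by at most the increment of `layer μ (B ∩ A) w` over a step of length `c`, and these
increments integrate to at most `c * μ (B ∩ A)`. Writing a bounded `d ≥ 0` as a staircase of such
steps, whose total cost is a lower Riemann sum of `∫ layer μ A d`, gives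
`C(v + d) ≤ C(v) + C(d)`; continuity from below removes the boundedness, so
`|C(f) - C(g)| ≤ C(|f - g|)`. Young's inequality `x ≤ a x ^ p + b`, integrated layerwise and
optimised, gives `C(d) ^ p ≤ μ(A) ^ (p - 1) C(d ^ p)`. Hence
`|V f t - V g t| ^ p ≤ μ[0,1] ^ (p - 1) ‖f - g‖ ^ p` for every `t ∈ [0,1]`, and integrating this
constant bound over `[0,1]` gives the Lipschitz estimate. The same uniform bound for `V f` alone,
together with measurability of `V f` (its layers are monotone in `x`), shows `V f ∈ L_{p,μ}`.
-/

variable {α : Type*}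

def layer (μ : Set α → ℝ) (A : Set α) (u : α → ℝ) (β : ℝ) : ℝ :=
  μ ({ω | β ≤ u ω} ∩ A)

def ChoquetIntegrable (μ : Set α → ℝ) (A : Set α) (u : α → ℝ) : Prop :=
  IntegrableOn (layer μ A fun ω => |u ω|) (Ioi 0)

def IsSubmodular (μ : Set α → ℝ) : Prop :=
  ∀ A B : Set α, μ (A ∪ B) + μ (A ∩ B) ≤ μ A + μ B

def IsContinuousFromBelow [MeasurableSpace α] (μ : Set α → ℝ) : Prop :=
  ∀ A : ℕ → Set α, (∀ k, MeasurableSet (A k)) → Monotone A →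
    Tendsto (fun k => μ (A k)) atTop (𝓝 (μ (⋃ k, A k)))

variable {μ : Set α → ℝ} {A B : Set α} {u v w : α → ℝ}

theorem choquet_eq_layer (μ : Set α → ℝ) (A : Set α) (u : α → ℝ) :
    choquet μ A u = (∫ β in Ioi 0, layer μ A u β) + ∫ β in Iio 0, (layer μ A u β - μ A) :=
  rfl

theorem apply_nonneg_of_empty (hμ0 : μ ∅ = 0) (hμ : Monotone μ) (A : Set α) : 0 ≤ μ A :=
  hμ0 ▸ hμ (empty_subset A)

theorem IsSubmodular.union_le (hμ0 : μ ∅ = 0) (hμ : Monotone μ) (hsub : IsSubmodular μ)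
    (A B : Set α) : μ (A ∪ B) ≤ μ A + μ B := by
  linarith [hsub A B, apply_nonneg_of_empty hμ0 hμ (A ∩ B)]

theorem layer_antitone (hμ : Monotone μ) (A : Set α) (u : α → ℝ) : Antitone (layer μ A u) :=
  fun _ _ hβ => hμ (inter_subset_inter_left _ fun _ hω => hβ.trans hω)

theorem layer_mono (hμ : Monotone μ) (huv : u ≤ v) (β : ℝ) : layer μ A u β ≤ layer μ A v β :=
  hμ (inter_subset_inter_left _ fun ω hω => le_trans hω (huv ω))

theorem layer_mono_set (hμ : Monotone μ) (hAB : A ⊆ B) (u : α → ℝ) (β : ℝ) :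
    layer μ A u β ≤ layer μ B u β :=
  hμ (inter_subset_inter_right _ hAB)

theorem layer_le (hμ : Monotone μ) (A : Set α) (u : α → ℝ) (β : ℝ) : layer μ A u β ≤ μ A :=
  hμ inter_subset_right

theorem layer_nonneg (hμ0 : μ ∅ = 0) (hμ : Monotone μ) (A : Set α) (u : α → ℝ) (β : ℝ) :
    0 ≤ layer μ A u β :=
  apply_nonneg_of_empty hμ0 hμ _

theorem layer_eq_measure {β : ℝ} (hβ : ∀ ω ∈ A, β ≤ u ω) : layer μ A u β = μ A := by
  rw [layer, inter_eq_right.2 (show A ⊆ {ω | β ≤ u ω} from hβ)]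

theorem measure_sub_layer_le (hμ0 : μ ∅ = 0) (hμ : Monotone μ) (hsub : IsSubmodular μ)
    (hu : ∀ ω, |u ω| ≤ |w ω|) (β : ℝ) :
    μ A - layer μ A u β ≤ layer μ A (fun ω => |w ω|) (-β) := by
  have hcover : A ⊆ ({ω | β ≤ u ω} ∩ A) ∪ ({ω | -β ≤ |w ω|} ∩ A) := by
    intro ω hω
    by_cases h : β ≤ u ω
    · exact Or.inl ⟨h, hω⟩
    · exact Or.inr ⟨show -β ≤ |w ω| by linarith [neg_abs_le (u ω), hu ω], hω⟩
  have := (hμ hcover).trans (hsub.union_le hμ0 hμ _ _)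
  rw [layer, layer]
  linarith

theorem choquet_of_nonneg (hu : 0 ≤ u) : choquet μ A u = ∫ β in Ioi 0, layer μ A u β := by
  rw [choquet_eq_layer, add_eq_left]
  refine setIntegral_eq_zero_of_forall_eq_zero fun β hβ => ?_
  rw [layer_eq_measure fun ω _ => (mem_Iio.1 hβ).le.trans (hu ω), sub_self]

theorem choquet_nonneg_s14 (hμ0 : μ ∅ = 0) (hμ : Monotone μ) (hu : 0 ≤ u) : 0 ≤ choquet μ A u := by
  rw [choquet_of_nonneg hu]
  exact setIntegral_nonneg measurableSet_Ioi fun β _ => layer_nonneg hμ0 hμ A u β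

theorem integrableOn_layer_of_measure_ne_top (hμ0 : μ ∅ = 0) (hμ : Monotone μ) {s : Set ℝ}
    (hs : volume s ≠ ⊤) : IntegrableOn (layer μ A u) s := by
  refine Measure.integrableOn_of_bounded (M := μ A) hs
    (layer_antitone hμ A u).measurable.aestronglyMeasurable (Eventually.of_forall fun β => ?_)
  rw [Real.norm_of_nonneg (layer_nonneg hμ0 hμ A u β)]
  exact layer_le hμ A u β

theorem layer_eq_zero_of_le_const {C β : ℝ} (hμ0 : μ ∅ = 0) (hC : ∀ ω ∈ A, u ω ≤ C)
    (hβ : C < β) : layer μ A u β = 0 := by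
  rw [layer, ← hμ0]
  congr 1
  exact eq_empty_of_forall_notMem fun ω hω => ((hC ω hω.2).trans_lt hβ).not_ge hω.1

theorem integrableOn_layer_of_le_const {C : ℝ} (hμ0 : μ ∅ = 0) (hμ : Monotone μ)
    (hC : ∀ ω ∈ A, u ω ≤ C) : IntegrableOn (layer μ A u) (Ioi 0) := by
  have hIoi : IntegrableOn (layer μ A u) (Ioi C) :=
    integrableOn_zero.congr_fun (fun β hβ => (layer_eq_zero_of_le_const hμ0 hC hβ).symm)
      measurableSet_Ioi
  refine ((integrableOn_layer_of_measure_ne_top hμ0 hμ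
    (measure_Ioc_lt_top (a := 0) (b := C)).ne).union hIoi).mono_set fun β hβ => ?_
  rcases le_or_gt β C with h | h
  exacts [Or.inl ⟨hβ, h⟩, Or.inr h]

theorem choquet_le_of_le_const {C : ℝ} (hμ0 : μ ∅ = 0) (hμ : Monotone μ) (hu : 0 ≤ u) (hC0 : 0 ≤ C)
    (hC : ∀ ω ∈ A, u ω ≤ C) : choquet μ A u ≤ C * μ A := by
  rw [choquet_of_nonneg hu, setIntegral_eq_of_subset_of_forall_sdiff_eq_zero measurableSet_Ioi
    Ioc_subset_Ioi_self fun β hβ =>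
      layer_eq_zero_of_le_const hμ0 hC (not_le.1 fun h => hβ.2 ⟨hβ.1, h⟩)]
  calc ∫ β in Ioc 0 C, layer μ A u β ≤ ∫ _ in Ioc 0 C, μ A :=
        setIntegral_mono_on (integrableOn_layer_of_measure_ne_top hμ0 hμ measure_Ioc_lt_top.ne)
          (integrableOn_const measure_Ioc_lt_top.ne) measurableSet_Ioc
          fun β _ => layer_le hμ A u β
    _ = C * μ A := by rw [setIntegral_const, Real.volume_real_Ioc_of_le hC0, sub_zero, smul_eq_mul]

theorem norm_layer_le (hμ0 : μ ∅ = 0) (hμ : Monotone μ) (huw : ∀ ω, |u ω| ≤ |w ω|) (β : ℝ) :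
    ‖layer μ A u β‖ ≤ layer μ A (fun ω => |w ω|) β := by
  rw [Real.norm_of_nonneg (layer_nonneg hμ0 hμ A u β)]
  exact layer_mono hμ (fun ω => (le_abs_self (u ω)).trans (huw ω)) β

theorem norm_layer_sub_le (hμ0 : μ ∅ = 0) (hμ : Monotone μ) (hsub : IsSubmodular μ)
    (huw : ∀ ω, |u ω| ≤ |w ω|) (β : ℝ) :
    ‖layer μ A u β - μ A‖ ≤ layer μ A (fun ω => |w ω|) (-β) := by
  rw [Real.norm_of_nonpos (sub_nonpos.2 (layer_le hμ A u β)), neg_sub]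
  exact measure_sub_layer_le hμ0 hμ hsub huw β

theorem integrableOn_layer_mono_set (hμ0 : μ ∅ = 0) (hμ : Monotone μ) (hAB : A ⊆ B)
    (hu : IntegrableOn (layer μ B u) (Ioi 0)) : IntegrableOn (layer μ A u) (Ioi 0) :=
  hu.mono' (layer_antitone hμ A _).measurable.aestronglyMeasurable
    (Eventually.of_forall fun β => by
      rw [Real.norm_of_nonneg (layer_nonneg hμ0 hμ A _ β)]
      exact layer_mono_set hμ hAB _ β)

namespace ChoquetIntegrable

theorem mono (hμ0 : μ ∅ = 0) (hμ : Monotone μ) (hw : ChoquetIntegrable μ A w)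
    (huw : ∀ ω, |u ω| ≤ |w ω|) : ChoquetIntegrable μ A u :=
  hw.mono' (layer_antitone hμ A _).measurable.aestronglyMeasurable
    (Eventually.of_forall (norm_layer_le hμ0 hμ fun ω => (abs_abs (u ω)).trans_le (huw ω)))

theorem mono_set (hμ0 : μ ∅ = 0) (hμ : Monotone μ) (hAB : A ⊆ B) (hu : ChoquetIntegrable μ B u) :
    ChoquetIntegrable μ A u :=
  integrableOn_layer_mono_set hμ0 hμ hAB hu

theorem integrableOn_layer (hμ0 : μ ∅ = 0) (hμ : Monotone μ) (hu : ChoquetIntegrable μ A u) :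
    IntegrableOn (layer μ A u) (Ioi 0) :=
  hu.mono' (layer_antitone hμ A u).measurable.aestronglyMeasurable
    (Eventually.of_forall (norm_layer_le hμ0 hμ fun _ => le_rfl))

theorem integrableOn_layer_neg (hu : ChoquetIntegrable μ A u) :
    IntegrableOn (fun β => layer μ A (fun ω => |u ω|) (-β)) (Iio 0) :=
  IntegrableOn.comp_neg_Iio (by rwa [neg_zero])

theorem integrableOn_layer_sub (hμ0 : μ ∅ = 0) (hμ : Monotone μ) (hsub : IsSubmodular μ)
    (hu : ChoquetIntegrable μ A u) : IntegrableOn (fun β => layer μ A u β - μ A) (Iio 0) :=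
  hu.integrableOn_layer_neg.mono'
    ((layer_antitone hμ A u).measurable.sub_const _).aestronglyMeasurable
    (Eventually.of_forall (norm_layer_sub_le hμ0 hμ hsub fun _ => le_rfl))

end ChoquetIntegrable

theorem choquetIntegrable_of_abs_le_const {C : ℝ} (hμ0 : μ ∅ = 0) (hμ : Monotone μ)
    (hC : ∀ ω, |u ω| ≤ C) : ChoquetIntegrable μ A u :=
  integrableOn_layer_of_le_const hμ0 hμ fun ω _ => hC ω

theorem integrableOn_layer_of_le_mul_max {a : ℝ} (hμ0 : μ ∅ = 0) (hμ : Monotone μ)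
    (hsub : IsSubmodular μ) (ha : 0 < a) (hu : IntegrableOn (layer μ A u) (Ioi 0))
    (hv : IntegrableOn (layer μ A v) (Ioi 0)) (hw : ∀ ω, w ω ≤ a * max (u ω) (v ω)) :
    IntegrableOn (layer μ A w) (Ioi 0) := by
  have hscale : ∀ {h : α → ℝ}, IntegrableOn (layer μ A h) (Ioi 0) →
      IntegrableOn (fun β => layer μ A h (a⁻¹ * β)) (Ioi 0) := fun hh =>
    (integrableOn_Ioi_comp_mul_left_iff _ 0 (inv_pos.2 ha)).2 (by rwa [mul_zero])
  refine ((hscale hu).add (hscale hv)).mono' (layer_antitone hμ A w).measurable.aestronglyMeasurable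
    (Eventually.of_forall fun β => ?_)
  rw [Real.norm_of_nonneg (layer_nonneg hμ0 hμ A w β)]
  refine (hμ fun ω hω => ?_).trans (hsub.union_le hμ0 hμ _ _)
  have hmax : a⁻¹ * β ≤ max (u ω) (v ω) := by
    rw [inv_mul_le_iff₀ ha]
    exact hω.1.trans (hw ω)
  rcases le_max_iff.1 hmax with h | h
  exacts [Or.inl ⟨h, hω.2⟩, Or.inr ⟨h, hω.2⟩]

theorem ChoquetIntegrable.of_abs_le_add (hμ0 : μ ∅ = 0) (hμ : Monotone μ)
    (hsub : IsSubmodular μ) (hu : ChoquetIntegrable μ A u) (hv : ChoquetIntegrable μ A v)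
    (hw : ∀ ω, |w ω| ≤ |u ω| + |v ω|) : ChoquetIntegrable μ A w :=
  integrableOn_layer_of_le_mul_max hμ0 hμ hsub two_pos hu hv fun ω =>
    (hw ω).trans (by linarith [le_max_left |u ω| |v ω|, le_max_right |u ω| |v ω|])

theorem ChoquetIntegrable.add (hμ0 : μ ∅ = 0) (hμ : Monotone μ) (hsub : IsSubmodular μ)
    (hu : ChoquetIntegrable μ A u) (hv : ChoquetIntegrable μ A v) :
    ChoquetIntegrable μ A (u + v) :=
  hu.of_abs_le_add hμ0 hμ hsub hv fun ω => abs_add_le (u ω) (v ω)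

theorem choquetIntegrable_of_rpow {p : ℝ} (hμ0 : μ ∅ = 0) (hμ : Monotone μ) (hp : 1 ≤ p)
    (hu : IntegrableOn (layer μ A fun ω => |u ω| ^ p) (Ioi 0)) : ChoquetIntegrable μ A u := by
  have hIoi : IntegrableOn (layer μ A fun ω => |u ω|) (Ioi 1) :=
    (hu.mono_set (Ioi_subset_Ioi zero_le_one)).mono'
      (layer_antitone hμ A _).measurable.aestronglyMeasurable
      ((ae_restrict_iff' measurableSet_Ioi).2 (Eventually.of_forall fun β hβ => by
        rw [Real.norm_of_nonneg (layer_nonneg hμ0 hμ A _ β)]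
        refine hμ (inter_subset_inter_left _ fun ω hω => ?_)
        have h1 : 1 ≤ |u ω| := (le_of_lt hβ).trans hω
        exact hω.trans (Real.self_le_rpow_of_one_le h1 hp)))
  refine ((integrableOn_layer_of_measure_ne_top hμ0 hμ
    (measure_Ioc_lt_top (a := 0) (b := 1)).ne).union hIoi).mono_set fun β hβ => ?_
  rcases le_or_gt β 1 with h | h
  exacts [Or.inl ⟨hβ, h⟩, Or.inr h]

theorem integrableOn_layer_abs_sub_rpow {p : ℝ} (hμ0 : μ ∅ = 0) (hμ : Monotone μ)
    (hsub : IsSubmodular μ) (hp : 0 ≤ p)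
    (hu : IntegrableOn (layer μ A fun ω => |u ω| ^ p) (Ioi 0))
    (hv : IntegrableOn (layer μ A fun ω => |v ω| ^ p) (Ioi 0)) :
    IntegrableOn (layer μ A fun ω => |u ω - v ω| ^ p) (Ioi 0) := by
  refine integrableOn_layer_of_le_mul_max hμ0 hμ hsub (Real.rpow_pos_of_pos two_pos p) hu hv
    fun ω => ?_
  have hle : |u ω - v ω| ≤ 2 * max |u ω| |v ω| := (abs_sub _ _).trans
    (by linarith [le_max_left |u ω| |v ω|, le_max_right |u ω| |v ω|])
  calc |u ω - v ω| ^ p ≤ (2 * max |u ω| |v ω|) ^ p := by gcongr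
    _ = 2 ^ p * max (|u ω| ^ p) (|v ω| ^ p) := by
      rw [Real.mul_rpow zero_le_two (le_max_of_le_left (abs_nonneg _)),
        Real.rpow_max (abs_nonneg _) (abs_nonneg _) hp]

theorem choquet_mono (hμ0 : μ ∅ = 0) (hμ : Monotone μ) (hsub : IsSubmodular μ)
    (hu : ChoquetIntegrable μ A u) (hv : ChoquetIntegrable μ A v) (huv : u ≤ v) :
    choquet μ A u ≤ choquet μ A v :=
  add_le_add
    (setIntegral_mono_on (hu.integrableOn_layer hμ0 hμ) (hv.integrableOn_layer hμ0 hμ)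
      measurableSet_Ioi fun β _ => layer_mono hμ huv β)
    (setIntegral_mono_on (hu.integrableOn_layer_sub hμ0 hμ hsub)
      (hv.integrableOn_layer_sub hμ0 hμ hsub) measurableSet_Iio
      fun β _ => sub_le_sub_right (layer_mono hμ huv β) _)

theorem choquet_mono_set_s14 (hμ0 : μ ∅ = 0) (hμ : Monotone μ) (hAB : A ⊆ B) (hu : 0 ≤ u)
    (huB : IntegrableOn (layer μ B u) (Ioi 0)) : choquet μ A u ≤ choquet μ B u := by
  rw [choquet_of_nonneg hu, choquet_of_nonneg hu]
  refine integral_mono_of_nonneg (Eventually.of_forall (layer_nonneg hμ0 hμ A u)) huB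
    (Eventually.of_forall (layer_mono_set hμ hAB u))

theorem abs_choquet_le (hμ0 : μ ∅ = 0) (hμ : Monotone μ) (hsub : IsSubmodular μ)
    (hu : ChoquetIntegrable μ A u) : |choquet μ A u| ≤ choquet μ A fun ω => |u ω| := by
  rw [choquet_of_nonneg fun ω => abs_nonneg (u ω)]
  have hpos : ∫ β in Ioi 0, layer μ A u β ≤ ∫ β in Ioi 0, layer μ A (fun ω => |u ω|) β :=
    setIntegral_mono_on (hu.integrableOn_layer hμ0 hμ) hu measurableSet_Ioi
      fun β _ => layer_mono hμ (fun ω => le_abs_self (u ω)) β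
  have hneg : -∫ β in Ioi 0, layer μ A (fun ω => |u ω|) β ≤
      ∫ β in Iio 0, (layer μ A u β - μ A) := by
    rw [← neg_zero, ← integral_comp_neg_Iic, integral_Iic_eq_integral_Iio, neg_zero,
      ← integral_neg]
    refine setIntegral_mono_on hu.integrableOn_layer_neg.neg
      (hu.integrableOn_layer_sub hμ0 hμ hsub) measurableSet_Iio fun β _ => ?_
    have := measure_sub_layer_le hμ0 hμ hsub (A := A) (u := u) (fun _ => le_rfl) β
    linarith
  have h0 : 0 ≤ ∫ β in Ioi 0, layer μ A u β :=
    setIntegral_nonneg measurableSet_Ioi fun β _ => layer_nonneg hμ0 hμ A u β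
  have h1 : ∫ β in Iio 0, (layer μ A u β - μ A) ≤ 0 :=
    setIntegral_nonpos measurableSet_Iio fun β _ => sub_nonpos.2 (layer_le hμ A u β)
  rw [choquet_eq_layer, abs_le]
  constructor <;> linarith

theorem Antitone.intervalIntegral_comp_sub_sub_le {g : ℝ → ℝ} (hg : Antitone g) {m M c : ℝ}
    (hm : ∀ β, m ≤ g β) (hM : ∀ β, g β ≤ M) (hc : 0 ≤ c) (a b : ℝ) :
    ∫ β in a..b, (g (β - c) - g β) ≤ c * (M - m) := by
  have hii : ∀ a b, IntervalIntegrable g volume a b := fun _ _ => hg.intervalIntegrable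
  have hshift : Antitone fun β => g (β - c) := fun _ _ h => hg (by linarith)
  rw [intervalIntegral.integral_sub hshift.intervalIntegrable (hii a b),
    intervalIntegral.integral_comp_sub_right,
    ← intervalIntegral.integral_add_adjacent_intervals (hii (a - c) a) (hii a (b - c)),
    ← intervalIntegral.integral_add_adjacent_intervals (hii a (b - c)) (hii (b - c) b)]
  have h1 : ∫ β in (a - c)..a, g β ≤ ∫ _ in (a - c)..a, M :=
    intervalIntegral.integral_mono_on (by linarith) (hii _ _) intervalIntegrable_const
      fun β _ => hM β
  have h2 : ∫ _ in (b - c)..b, m ≤ ∫ β in (b - c)..b, g β :=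
    intervalIntegral.integral_mono_on (by linarith) intervalIntegrable_const (hii _ _)
      fun β _ => hm β
  simp only [intervalIntegral.integral_const, smul_eq_mul] at h1 h2
  nlinarith

theorem Antitone.integrable_comp_sub_sub {g : ℝ → ℝ} (hg : Antitone g) {m M c : ℝ}
    (hm : ∀ β, m ≤ g β) (hM : ∀ β, g β ≤ M) (hc : 0 ≤ c) :
    Integrable fun β => g (β - c) - g β := by
  have hshift : Antitone fun β => g (β - c) := fun _ _ h => hg (by linarith)
  refine integrable_of_intervalIntegral_norm_bounded (l := atTop) (a := Neg.neg) (b := id)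
    (c * (M - m))
    (fun _ => (hshift.intervalIntegrable.sub hg.intervalIntegrable).1) tendsto_neg_atTop_atBot
    tendsto_id (Eventually.of_forall fun x => ?_)
  rw [intervalIntegral.integral_congr fun β _ =>
    Real.norm_of_nonneg (sub_nonneg.2 (hg (by linarith : β - c ≤ β)))]
  exact hg.intervalIntegral_comp_sub_sub_le hm hM hc _ _

theorem Antitone.integral_comp_sub_sub_le {g : ℝ → ℝ} (hg : Antitone g) {m M c : ℝ}
    (hm : ∀ β, m ≤ g β) (hM : ∀ β, g β ≤ M) (hc : 0 ≤ c) :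
    ∫ β, (g (β - c) - g β) ≤ c * (M - m) :=
  _root_.le_of_tendsto (intervalIntegral_tendsto_integral (hg.integrable_comp_sub_sub hm hM hc)
    tendsto_neg_atTop_atBot tendsto_id)
    (Eventually.of_forall fun _ => hg.intervalIntegral_comp_sub_sub_le hm hM hc _ _)

theorem choquet_le_add_integral_of_layer_le {D : ℝ → ℝ} (hμ0 : μ ∅ = 0) (hμ : Monotone μ)
    (hsub : IsSubmodular μ) (hu : ChoquetIntegrable μ A u) (hv : ChoquetIntegrable μ A v)
    (hD : Integrable D) (huv : ∀ β, layer μ A u β ≤ layer μ A v β + D β) :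
    choquet μ A u ≤ choquet μ A v + ∫ β, D β := by
  rw [← intervalIntegral.integral_Iic_add_Ioi hD.integrableOn hD.integrableOn,
    integral_Iic_eq_integral_Iio]
  have hpos : ∫ β in Ioi 0, layer μ A u β ≤ (∫ β in Ioi 0, layer μ A v β) + ∫ β in Ioi 0, D β := by
    rw [← integral_add (hv.integrableOn_layer hμ0 hμ) hD.integrableOn]
    exact setIntegral_mono_on (hu.integrableOn_layer hμ0 hμ)
      ((hv.integrableOn_layer hμ0 hμ).add hD.integrableOn) measurableSet_Ioi fun β _ => huv β
  have hneg : ∫ β in Iio 0, (layer μ A u β - μ A) ≤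
      (∫ β in Iio 0, (layer μ A v β - μ A)) + ∫ β in Iio 0, D β := by
    rw [← integral_add (hv.integrableOn_layer_sub hμ0 hμ hsub) hD.integrableOn]
    exact setIntegral_mono_on (hu.integrableOn_layer_sub hμ0 hμ hsub)
      ((hv.integrableOn_layer_sub hμ0 hμ hsub).add hD.integrableOn) measurableSet_Iio
      fun β _ => by linarith [huv β]
  rw [choquet_eq_layer, choquet_eq_layer]
  linarith

theorem layer_add_indicator_le {c : ℝ} (hμ : Monotone μ) (hsub : IsSubmodular μ) (hc : 0 ≤ c)
    (β : ℝ) : layer μ A (w + B.indicator fun _ => c) β ≤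
      layer μ A w β + (layer μ (B ∩ A) w (β - c) - layer μ (B ∩ A) w β) := by
  have hunion : {ω | β ≤ (w + B.indicator fun _ => c) ω} ∩ A ⊆
      ({ω | β ≤ w ω} ∩ A) ∪ ({ω | β - c ≤ w ω} ∩ (B ∩ A)) := by
    rintro ω ⟨hω : β ≤ w ω + B.indicator (fun _ => c) ω, hωA⟩
    by_cases hωB : ω ∈ B
    · rw [indicator_of_mem hωB] at hω
      exact Or.inr ⟨show β - c ≤ w ω by linarith, hωB, hωA⟩
    · rw [indicator_of_notMem hωB, add_zero] at hω
      exact Or.inl ⟨hω, hωA⟩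
  have hinter : {ω | β ≤ w ω} ∩ (B ∩ A) ⊆
      ({ω | β ≤ w ω} ∩ A) ∩ ({ω | β - c ≤ w ω} ∩ (B ∩ A)) :=
    fun ω ⟨(hω : β ≤ w ω), hωB, hωA⟩ => ⟨⟨hω, hωA⟩, show β - c ≤ w ω by linarith, hωB, hωA⟩
  have := hsub ({ω | β ≤ w ω} ∩ A) ({ω | β - c ≤ w ω} ∩ (B ∩ A))
  have := hμ hunion
  have := hμ hinter
  simp only [layer]
  linarith

theorem abs_indicator_const_le {c : ℝ} (hc : 0 ≤ c) (ω : α) :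
    |B.indicator (fun _ => c) ω| ≤ c := by
  by_cases h : ω ∈ B <;> simp [h, abs_of_nonneg hc, hc]

theorem abs_sum_indicator_const_le {c : ℕ → ℝ} (hc : ∀ i, 0 ≤ c i) (B : ℕ → Set α) (K : ℕ)
    (ω : α) : |(∑ i ∈ Finset.range K, (B i).indicator fun _ => c i) ω| ≤
      ∑ i ∈ Finset.range K, c i := by
  rw [Finset.sum_apply]
  exact (Finset.abs_sum_le_sum_abs _ _).trans
    (Finset.sum_le_sum fun i _ => abs_indicator_const_le (hc i) ω)

theorem choquet_add_indicator_le {c : ℝ} (hμ0 : μ ∅ = 0) (hμ : Monotone μ)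
    (hsub : IsSubmodular μ) (hw : ChoquetIntegrable μ A w) (hc : 0 ≤ c) :
    choquet μ A (w + B.indicator fun _ => c) ≤ choquet μ A w + c * μ (B ∩ A) := by
  have hg := layer_antitone hμ (B ∩ A) w
  have hDle := hg.integral_comp_sub_sub_le (layer_nonneg hμ0 hμ _ w) (layer_le hμ _ w) hc
  have hwc : ChoquetIntegrable μ A (w + B.indicator fun _ => c) :=
    hw.add hμ0 hμ hsub (choquetIntegrable_of_abs_le_const hμ0 hμ (abs_indicator_const_le hc))
  refine (choquet_le_add_integral_of_layer_le hμ0 hμ hsub hwc hw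
    (hg.integrable_comp_sub_sub (layer_nonneg hμ0 hμ _ w) (layer_le hμ _ w) hc)
    (layer_add_indicator_le hμ hsub hc)).trans ?_
  linarith

theorem choquet_add_sum_indicator_le {c : ℕ → ℝ} (hμ0 : μ ∅ = 0) (hμ : Monotone μ)
    (hsub : IsSubmodular μ) (hw : ChoquetIntegrable μ A w) (hc : ∀ i, 0 ≤ c i)
    (B : ℕ → Set α) (K : ℕ) :
    choquet μ A (w + ∑ i ∈ Finset.range K, (B i).indicator fun _ => c i) ≤
      choquet μ A w + ∑ i ∈ Finset.range K, c i * μ (B i ∩ A) := by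
  induction K with
  | zero => simp
  | succ K ih =>
    have hK : ChoquetIntegrable μ A (w + ∑ i ∈ Finset.range K, (B i).indicator fun _ => c i) :=
      hw.add hμ0 hμ hsub
        (choquetIntegrable_of_abs_le_const hμ0 hμ (abs_sum_indicator_const_le hc B K))
    rw [Finset.sum_range_succ, Finset.sum_range_succ, ← add_assoc, ← add_assoc]
    exact (choquet_add_indicator_le hμ0 hμ hsub hK (hc K)).trans (by linarith)

theorem sum_mul_le_integral_of_antitone {m : ℝ → ℝ} (hm : Antitone m) (hm0 : ∀ β, 0 ≤ m β)
    (hint : IntegrableOn m (Ioi 0)) {c : ℝ} (hc : 0 < c) (K : ℕ) :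
    ∑ i ∈ Finset.range K, c * m ((i + 1) * c) ≤ ∫ β in Ioi 0, m β := by
  have hsum := AntitoneOn.sum_le_integral (x₀ := 0) (a := K) (f := fun x => m (x * c))
    (fun x _ y _ hxy => hm (mul_le_mul_of_nonneg_right hxy hc.le))
  rw [intervalIntegral.integral_comp_mul_right _ hc.ne', zero_add, zero_mul, smul_eq_mul,
    intervalIntegral.integral_of_le (by positivity)] at hsum
  simp only [zero_add, Nat.cast_add, Nat.cast_one] at hsum
  calc ∑ i ∈ Finset.range K, c * m ((i + 1) * c) = c * ∑ i ∈ Finset.range K, m ((i + 1) * c) :=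
        (Finset.mul_sum _ _ _).symm
    _ ≤ c * (c⁻¹ * ∫ β in Ioc 0 (K * c), m β) := by gcongr
    _ = ∫ β in Ioc 0 (K * c), m β := by field_simp
    _ ≤ ∫ β in Ioi 0, m β := setIntegral_mono_set hint (Eventually.of_forall hm0)
        Ioc_subset_Ioi_self.eventuallyLE

theorem le_sum_ite_add {c x : ℝ} (hc : 0 < c) {K : ℕ} (hx : x ≤ K * c) :
    x ≤ ∑ i ∈ Finset.range K, (if (i + 1) * c ≤ x then c else 0) + c := by
  induction K with
  | zero => simp only [CharP.cast_eq_zero, zero_mul] at hx; simp; linarith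
  | succ K ih =>
    have hite : 0 ≤ if ((K : ℝ) + 1) * c ≤ x then c else 0 := by split_ifs <;> linarith
    rw [Finset.sum_range_succ]
    by_cases hxK : x ≤ K * c
    · linarith [ih hxK]
    · have hfull : ∑ i ∈ Finset.range K, (if ((i : ℝ) + 1) * c ≤ x then c else 0) = K * c := by
        rw [Finset.sum_congr rfl fun i hi => if_pos ?_, Finset.sum_const, Finset.card_range,
          nsmul_eq_mul]
        have : (i : ℝ) + 1 ≤ K := by exact_mod_cast Finset.mem_range.1 hi
        nlinarith
      push_cast at hx
      linarith

theorem choquet_add_le_of_bounded {d : α → ℝ} {C : ℝ} (hμ0 : μ ∅ = 0) (hμ : Monotone μ)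
    (hsub : IsSubmodular μ) (hv : ChoquetIntegrable μ A v) (hd0 : 0 ≤ d) (hdC : ∀ ω, d ω ≤ C) :
    choquet μ A (v + d) ≤ choquet μ A v + choquet μ A d := by
  refine le_of_forall_pos_le_add fun ε hε => ?_
  have hA0 : 0 ≤ μ A := apply_nonneg_of_empty hμ0 hμ A
  set c := ε / (μ A + 1) with hc_def
  have hc : 0 < c := by positivity
  have hcA : c * μ A ≤ ε := by
    rw [hc_def, div_mul_eq_mul_div, div_le_iff₀ (by positivity)]
    nlinarith
  set K := ⌈C / c⌉₊
  have hCK : C ≤ K * c := (div_le_iff₀ hc).1 (Nat.le_ceil _)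
  set B : ℕ → Set α := fun i => {ω | (i + 1) * c ≤ d ω}
  set stair := ∑ i ∈ Finset.range K, (B i).indicator fun _ => c
  have hstair : v + d ≤ v + stair + univ.indicator fun _ => c := fun ω => by
    simp only [Pi.add_apply, stair, Finset.sum_apply, indicator_apply, B, mem_ofPred_eq, mem_univ,
      if_true]
    linarith [le_sum_ite_add hc ((hdC ω).trans hCK)]
  have hdi : ChoquetIntegrable μ A d :=
    choquetIntegrable_of_abs_le_const hμ0 hμ fun ω => (abs_of_nonneg (hd0 ω)).trans_le (hdC ω)
  have hvs : ChoquetIntegrable μ A (v + stair) :=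
    hv.add hμ0 hμ hsub
      (choquetIntegrable_of_abs_le_const hμ0 hμ (abs_sum_indicator_const_le (fun _ => hc.le) B K))
  have hriemann : ∑ i ∈ Finset.range K, c * μ (B i ∩ A) ≤ choquet μ A d := by
    rw [choquet_of_nonneg hd0]
    exact sum_mul_le_integral_of_antitone (layer_antitone hμ A d) (layer_nonneg hμ0 hμ A d)
      (hdi.integrableOn_layer hμ0 hμ) hc K
  calc choquet μ A (v + d) ≤ choquet μ A (v + stair + univ.indicator fun _ => c) :=
        choquet_mono hμ0 hμ hsub (hv.add hμ0 hμ hsub hdi)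
          (hvs.add hμ0 hμ hsub
            (choquetIntegrable_of_abs_le_const hμ0 hμ (abs_indicator_const_le hc.le)))
          hstair
    _ ≤ choquet μ A (v + stair) + c * μ (univ ∩ A) := choquet_add_indicator_le hμ0 hμ hsub hvs hc.le
    _ ≤ choquet μ A v + ∑ i ∈ Finset.range K, c * μ (B i ∩ A) + c * μ A := by
        rw [univ_inter]
        gcongr
        exact choquet_add_sum_indicator_le hμ0 hμ hsub hv (fun _ => hc.le) B K
    _ ≤ choquet μ A v + choquet μ A d + ε := by linarith

theorem tendsto_layer_of_monotone [MeasurableSpace α] {w : ℕ → α → ℝ} {w' : α → ℝ}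
    (hcb : IsContinuousFromBelow μ) (hA : MeasurableSet A) (hwm : ∀ n, Measurable (w n))
    (hw : Monotone w) (hlim : ∀ ω, ∀ᶠ n in atTop, w n ω = w' ω) (β : ℝ) :
    Tendsto (fun n => layer μ A (w n) β) atTop (𝓝 (layer μ A w' β)) := by
  have hunion : ⋃ n, {ω | β ≤ w n ω} ∩ A = {ω | β ≤ w' ω} ∩ A := by
    ext ω
    simp only [mem_iUnion, mem_inter_iff, mem_ofPred_eq]
    constructor
    · rintro ⟨n, hn, hωA⟩
      obtain ⟨m, hmω, hm⟩ := ((hlim ω).and (eventually_ge_atTop n)).exists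
      exact ⟨hmω ▸ hn.trans (hw hm ω), hωA⟩
    · rintro ⟨hβ, hωA⟩
      obtain ⟨n, hn⟩ := (hlim ω).exists
      exact ⟨n, hn ▸ hβ, hωA⟩
  have := hcb (fun n => {ω | β ≤ w n ω} ∩ A)
    (fun n => (measurableSet_le measurable_const (hwm n)).inter hA)
    (fun n m hnm => inter_subset_inter_left _ fun ω hω => le_trans hω (hw hnm ω))
  rwa [hunion] at this

theorem tendsto_choquet_of_monotone [MeasurableSpace α] {w : ℕ → α → ℝ} {w' h : α → ℝ}
    (hμ0 : μ ∅ = 0) (hμ : Monotone μ) (hsub : IsSubmodular μ) (hcb : IsContinuousFromBelow μ)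
    (hA : MeasurableSet A) (hwm : ∀ n, Measurable (w n)) (hw : Monotone w)
    (hlim : ∀ ω, ∀ᶠ n in atTop, w n ω = w' ω) (hh : ChoquetIntegrable μ A h)
    (hdom : ∀ n ω, |w n ω| ≤ |h ω|) :
    Tendsto (fun n => choquet μ A (w n)) atTop (𝓝 (choquet μ A w')) := by
  have hlayer := tendsto_layer_of_monotone hcb hA hwm hw hlim
  refine Tendsto.add ?_ ?_
  · exact tendsto_integral_of_dominated_convergence _
      (fun n => (layer_antitone hμ A (w n)).measurable.aestronglyMeasurable) hh
      (fun n => Eventually.of_forall (norm_layer_le hμ0 hμ (hdom n)))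
      (Eventually.of_forall hlayer)
  · exact tendsto_integral_of_dominated_convergence _
      (fun n => ((layer_antitone hμ A (w n)).measurable.sub_const _).aestronglyMeasurable)
      hh.integrableOn_layer_neg
      (fun n => Eventually.of_forall (norm_layer_sub_le hμ0 hμ hsub (hdom n)))
      (Eventually.of_forall fun β => (hlayer β).sub_const _)

theorem choquet_add_le [MeasurableSpace α] {d : α → ℝ} (hμ0 : μ ∅ = 0) (hμ : Monotone μ)
    (hsub : IsSubmodular μ) (hcb : IsContinuousFromBelow μ) (hA : MeasurableSet A)
    (hvm : Measurable v) (hdm : Measurable d) (hd0 : 0 ≤ d) (hv : ChoquetIntegrable μ A v)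
    (hd : ChoquetIntegrable μ A d) :
    choquet μ A (v + d) ≤ choquet μ A v + choquet μ A d := by
  set dn : ℕ → α → ℝ := fun n ω => min (d ω) n
  have hdn : ∀ n, ChoquetIntegrable μ A (dn n) := fun n =>
    hd.mono hμ0 hμ fun ω => by
      rw [abs_of_nonneg (le_min (hd0 ω) n.cast_nonneg), abs_of_nonneg (hd0 ω)]
      exact min_le_left _ _
  have hdom : ChoquetIntegrable μ A fun ω => |v ω| + d ω :=
    hv.of_abs_le_add hμ0 hμ hsub hd fun ω => by
      rw [abs_of_nonneg (add_nonneg (abs_nonneg _) (hd0 ω)), abs_of_nonneg (hd0 ω)]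
  refine le_of_tendsto' (tendsto_choquet_of_monotone (w := fun n => v + dn n) hμ0 hμ hsub hcb hA
    (fun n => hvm.add (hdm.min measurable_const))
    (fun n m hnm ω => by simp only [Pi.add_apply, dn]; gcongr)
    (fun ω => (eventually_ge_atTop ⌈d ω⌉₊).mono fun n hn => by
      simp only [Pi.add_apply, dn, min_eq_left ((Nat.le_ceil _).trans (Nat.cast_le.2 hn))])
    hdom fun n ω => ?_) fun n => ?_
  · rw [abs_of_nonneg (add_nonneg (abs_nonneg _) (hd0 ω))]
    refine (abs_add_le _ _).trans ?_
    rw [abs_of_nonneg (le_min (hd0 ω) n.cast_nonneg)]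
    gcongr
    exact min_le_left _ _
  · calc choquet μ A (v + dn n) ≤ choquet μ A v + choquet μ A (dn n) :=
          choquet_add_le_of_bounded hμ0 hμ hsub hv (fun ω => le_min (hd0 ω) n.cast_nonneg)
            fun ω => min_le_right _ _
      _ ≤ choquet μ A v + choquet μ A d := by
          gcongr
          exact choquet_mono hμ0 hμ hsub (hdn n) hd fun ω => min_le_left _ _

theorem abs_choquet_sub_choquet_le [MeasurableSpace α] (hμ0 : μ ∅ = 0) (hμ : Monotone μ)
    (hsub : IsSubmodular μ) (hcb : IsContinuousFromBelow μ) (hA : MeasurableSet A)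
    (hum : Measurable u) (hvm : Measurable v) (hu : ChoquetIntegrable μ A u)
    (hv : ChoquetIntegrable μ A v) :
    |choquet μ A u - choquet μ A v| ≤ choquet μ A fun ω => |u ω - v ω| := by
  set d : α → ℝ := fun ω => |u ω - v ω|
  have hdm : Measurable d := (hum.sub hvm).abs
  have hd0 : 0 ≤ d := fun ω => abs_nonneg _
  have hd : ChoquetIntegrable μ A d :=
    hu.of_abs_le_add hμ0 hμ hsub hv fun ω => (abs_abs _).trans_le (abs_sub _ _)
  have hle : ∀ {f g : α → ℝ}, Measurable g → ChoquetIntegrable μ A f →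
      ChoquetIntegrable μ A g → f ≤ g + d → choquet μ A f ≤ choquet μ A g + choquet μ A d :=
    fun hgm hf hg hfg => (choquet_mono hμ0 hμ hsub hf (hg.add hμ0 hμ hsub hd) hfg).trans
      (choquet_add_le hμ0 hμ hsub hcb hA hgm hdm hd0 hg hd)
  rw [abs_sub_le_iff]
  constructor
  · linarith [hle hvm hu hv fun ω => show u ω ≤ v ω + |u ω - v ω| by
      linarith [le_abs_self (u ω - v ω)]]
  · linarith [hle hum hv hu fun ω => show v ω ≤ u ω + |u ω - v ω| by
      linarith [neg_abs_le (u ω - v ω)]]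

theorem integral_Ioi_comp_sub (G : ℝ → ℝ) (b : ℝ) :
    ∫ β in Ioi b, G (β - b) = ∫ β in Ioi 0, G β := by
  have := (measurePreserving_sub_right volume b).setIntegral_preimage_emb
    (measurableEmbedding_subRight b) G (Ioi 0)
  rwa [preimage_sub_const_Ioi, zero_add] at this

theorem IntegrableOn.comp_sub_Ioi {G : ℝ → ℝ} (hG : IntegrableOn G (Ioi 0)) (b : ℝ) :
    IntegrableOn (fun β => G (β - b)) (Ioi b) := by
  have := ((measurePreserving_sub_right volume b).integrableOn_comp_preimage
    (measurableEmbedding_subRight b)).2 hG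
  rwa [preimage_sub_const_Ioi, zero_add] at this

theorem integral_layer_le_of_le_mul_add {a b : ℝ} (hμ : Monotone μ) (ha : 0 < a)
    (hb : 0 ≤ b) (huv : ∀ ω ∈ A, u ω ≤ a * v ω + b) (hu : IntegrableOn (layer μ A u) (Ioi 0))
    (hv : IntegrableOn (layer μ A v) (Ioi 0)) :
    ∫ β in Ioi 0, layer μ A u β ≤ b * μ A + a * ∫ β in Ioi 0, layer μ A v β := by
  set G : ℝ → ℝ := fun γ => layer μ A v (a⁻¹ * γ)
  have hG : IntegrableOn G (Ioi 0) :=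
    (integrableOn_Ioi_comp_mul_left_iff _ 0 (inv_pos.2 ha)).2 (by rwa [mul_zero])
  have hGint : ∫ γ in Ioi 0, G γ = a * ∫ β in Ioi 0, layer μ A v β := by
    rw [integral_comp_mul_left_Ioi _ 0 (inv_pos.2 ha), mul_zero, inv_inv, smul_eq_mul]
  have hsplit : ∫ β in Ioi 0, layer μ A u β =
      (∫ β in Ioc 0 b, layer μ A u β) + ∫ β in Ioi b, layer μ A u β := by
    rw [← setIntegral_union Ioc_disjoint_Ioi_same measurableSet_Ioi
      (hu.mono_set Ioc_subset_Ioi_self) (hu.mono_set (Ioi_subset_Ioi hb)),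
      Ioc_union_Ioi_eq_Ioi hb]
  rw [hsplit]
  gcongr
  · calc ∫ β in Ioc 0 b, layer μ A u β ≤ ∫ _ in Ioc 0 b, μ A :=
          setIntegral_mono_on (hu.mono_set Ioc_subset_Ioi_self)
            (integrableOn_const measure_Ioc_lt_top.ne) measurableSet_Ioc
            fun β _ => layer_le hμ A u β
      _ = b * μ A := by rw [setIntegral_const, Real.volume_real_Ioc_of_le hb, sub_zero, smul_eq_mul]
  · rw [← hGint, ← integral_Ioi_comp_sub G b]
    refine setIntegral_mono_on (hu.mono_set (Ioi_subset_Ioi hb)) (IntegrableOn.comp_sub_Ioi hG b)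
      measurableSet_Ioi fun β _ => hμ fun ω hω => ?_
    have hβ : β ≤ u ω := hω.1
    refine ⟨show a⁻¹ * (β - b) ≤ v ω from ?_, hω.2⟩
    rw [inv_mul_le_iff₀ ha]
    linarith [huv ω hω.2]

theorem mul_rpow_sub_one_mul_le {p t x : ℝ} (hp : 1 ≤ p) (ht : 0 < t) (hx : 0 ≤ x) :
    p * t ^ (p - 1) * x ≤ x ^ p + (p - 1) * t ^ p := by
  have hbern := one_add_mul_self_le_rpow_one_add (s := x / t - 1) (by
    have : 0 ≤ x / t := div_nonneg hx ht.le
    linarith) hp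
  rw [add_sub_cancel, Real.div_rpow hx ht.le, le_div_iff₀ (Real.rpow_pos_of_pos ht p)] at hbern
  have htp : t ^ p = t ^ (p - 1) * t := by
    rw [← Real.rpow_add_one ht.ne', sub_add_cancel]
  rw [htp] at hbern ⊢
  have : (1 + p * (x / t - 1)) * (t ^ (p - 1) * t) =
      t ^ (p - 1) * t + p * t ^ (p - 1) * x - p * (t ^ (p - 1) * t) := by
    field_simp
    ring
  nlinarith

theorem choquet_rpow_le {p : ℝ} {d : α → ℝ} (hμ0 : μ ∅ = 0) (hμ : Monotone μ) (hp : 1 ≤ p)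
    (hd : 0 ≤ d) (hdi : IntegrableOn (layer μ A d) (Ioi 0))
    (hdpi : IntegrableOn (layer μ A fun ω => d ω ^ p) (Ioi 0)) :
    choquet μ A d ^ p ≤ μ A ^ (p - 1) * choquet μ A fun ω => d ω ^ p := by
  have hp0 : 0 < p := by linarith
  have hA0 : 0 ≤ μ A := apply_nonneg_of_empty hμ0 hμ A
  have hS0 := choquet_nonneg_s14 hμ0 hμ (A := A) hd
  have hN0 := choquet_nonneg_s14 hμ0 hμ (A := A) fun ω => Real.rpow_nonneg (hd ω) p
  rw [choquet_of_nonneg hd, choquet_of_nonneg fun ω => Real.rpow_nonneg (hd ω) p] at *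
  set S := ∫ β in Ioi 0, layer μ A d β
  set N := ∫ β in Ioi 0, layer μ A (fun ω => d ω ^ p) β
  rcases hS0.eq_or_lt with hS | hS
  · rw [← hS, Real.zero_rpow hp0.ne']
    positivity
  have hA : 0 < μ A := by
    refine hA0.lt_of_ne fun hA => hS.not_ge ?_
    exact setIntegral_nonpos measurableSet_Ioi fun β _ => hA ▸ layer_le hμ A d β
  -- Young's inequality `x ≤ x ^ p / k + (p - 1) * t ^ p / k`, sharp at the level `t = S / μ A`
  set t := S / μ A
  have ht : 0 < t := div_pos hS hA
  have htS : t * μ A = S := div_mul_cancel₀ S hA.ne'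
  set k := p * t ^ (p - 1)
  have hk : 0 < k := mul_pos hp0 (Real.rpow_pos_of_pos ht _)
  have hyoung := integral_layer_le_of_le_mul_add hμ (a := k⁻¹) (b := (p - 1) * t ^ p / k)
    (inv_pos.2 hk) (div_nonneg (mul_nonneg (by linarith) (Real.rpow_nonneg ht.le _)) hk.le)
    (fun ω _ => by
      rw [inv_mul_eq_div, ← add_div, le_div_iff₀ hk, mul_comm]
      exact mul_rpow_sub_one_mul_le hp ht (hd ω)) hdi hdpi
  have htp : t ^ p = t ^ (p - 1) * t := by rw [← Real.rpow_add_one ht.ne', sub_add_cancel]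
  have hkey : t ^ (p - 1) * S ≤ N := by
    rw [div_mul_eq_mul_div, inv_mul_eq_div, ← add_div, le_div_iff₀ hk, htp] at hyoung
    nlinarith [Real.rpow_pos_of_pos ht (p - 1)]
  calc S ^ p = (t * μ A) ^ (p - 1) * S := by
        rw [htS, Real.rpow_sub_one hS.ne', div_mul_cancel₀ _ hS.ne']
    _ = μ A ^ (p - 1) * (t ^ (p - 1) * S) := by
        rw [Real.mul_rpow ht.le hA0]
        ring
    _ ≤ μ A ^ (p - 1) * N := by gcongr

theorem measurable_setIntegral_of_nonneg {X Ω : Type*} [MeasurableSpace X] [MeasurableSpace Ω]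
    {ν : Measure Ω} {F : X → Ω → ℝ} {s : Set Ω} {t : ℕ → Set Ω} (ht : Monotone t)
    (hts : ⋃ n, t n = s) (hF0 : ∀ x ω, 0 ≤ F x ω)
    (hFm : ∀ x, AEStronglyMeasurable (F x) (ν.restrict s))
    (hint : ∀ x n, IntegrableOn (F x) (t n) ν)
    (htrunc : ∀ n, Measurable fun x => ∫ ω in t n, F x ω ∂ν) :
    Measurable fun x => ∫ ω in s, F x ω ∂ν := by
  -- a non-integrable `F x` has lower integral `∞`, whose `toReal` is the junk value `0` of `∫`
  have hsup : ∀ x, ∫ ω in s, F x ω ∂ν =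
      (⨆ n, ENNReal.ofReal (∫ ω in t n, F x ω ∂ν)).toReal := fun x => by
    rw [integral_eq_lintegral_of_nonneg_ae (Eventually.of_forall (hF0 x)) (hFm x), ← hts,
      setLIntegral_iUnion_of_directed _ ht.directed_le]
    simp_rw [ofReal_integral_eq_lintegral_ofReal (hint x _) (Eventually.of_forall (hF0 x))]
  simp_rw [hsup]
  exact (Measurable.iSup fun n => (htrunc n).ennreal_ofReal).ennreal_toReal

theorem monotone_setIntegral_layer {A : ℝ → Set α} {s : Set ℝ} (hμ0 : μ ∅ = 0)
    (hμ : Monotone μ) (hA : Monotone A) (hs : volume s ≠ ⊤) (u : α → ℝ) :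
    Monotone fun x => ∫ β in s, layer μ (A x) u β := fun _ _ hxy =>
  setIntegral_mono (integrableOn_layer_of_measure_ne_top hμ0 hμ hs)
    (integrableOn_layer_of_measure_ne_top hμ0 hμ hs) (layer_mono_set hμ (hA hxy) u)

theorem measurable_choquet_of_monotone {A : ℝ → Set α} (hμ0 : μ ∅ = 0) (hμ : Monotone μ)
    (hA : Monotone A) (u : α → ℝ) : Measurable fun x => choquet μ (A x) u := by
  set t : Set ℝ → ℕ → Set ℝ := fun s n => s ∩ Metric.closedBall 0 n
  have ht : ∀ s, Monotone (t s) := fun s n m hnm =>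
    inter_subset_inter_right s (Metric.closedBall_subset_closedBall (Nat.cast_le.2 hnm))
  have hts : ∀ s, ⋃ n, t s n = s := fun s => by
    rw [← inter_iUnion, Metric.iUnion_closedBall_nat, inter_univ]
  have htfin : ∀ s n, volume (t s n) ≠ ⊤ := fun s n =>
    ((measure_mono inter_subset_right).trans_lt measure_closedBall_lt_top).ne
  have hpos : Measurable fun x => ∫ β in Ioi 0, layer μ (A x) u β :=
    measurable_setIntegral_of_nonneg (ht _) (hts _) (fun x => layer_nonneg hμ0 hμ (A x) u)
      (fun x => (layer_antitone hμ (A x) u).measurable.aestronglyMeasurable)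
      (fun x n => integrableOn_layer_of_measure_ne_top hμ0 hμ (htfin _ n))
      fun n => (monotone_setIntegral_layer hμ0 hμ hA (htfin _ n) u).measurable
  -- `μ (A x) - layer μ (A x) u β` need not be monotone in `x`, but its integral over a bounded
  -- set is the difference of two monotone functions of `x`
  have hneg : Measurable fun x => ∫ β in Iio 0, (μ (A x) - layer μ (A x) u β) := by
    refine measurable_setIntegral_of_nonneg (ht _) (hts _)
      (fun x β => sub_nonneg.2 (layer_le hμ (A x) u β))
      (fun x => (measurable_const.sub (layer_antitone hμ (A x) u).measurable).aestronglyMeasurable)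
      (fun x n => (integrableOn_const (htfin _ n)).sub
        (integrableOn_layer_of_measure_ne_top hμ0 hμ (htfin _ n))) fun n => ?_
    have hsplit : (fun x => ∫ β in t (Iio 0) n, (μ (A x) - layer μ (A x) u β)) =
        fun x => volume.real (t (Iio 0) n) * μ (A x) - ∫ β in t (Iio 0) n, layer μ (A x) u β :=
      funext fun x => by
        rw [integral_sub (integrableOn_const (C := μ (A x)) (htfin _ n))
          (integrableOn_layer_of_measure_ne_top hμ0 hμ (htfin _ n)), setIntegral_const,
          smul_eq_mul]
    rw [hsplit]
    exact (measurable_const.mul (hμ.comp hA).measurable).sub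
      (monotone_setIntegral_layer hμ0 hμ hA (htfin _ n) u).measurable
  have hchoquet : (fun x => choquet μ (A x) u) = fun x =>
      (∫ β in Ioi 0, layer μ (A x) u β) - ∫ β in Iio 0, (μ (A x) - layer μ (A x) u β) :=
    funext fun x => by rw [choquet_eq_layer, sub_eq_add_neg, ← integral_neg]; simp_rw [neg_sub]
  rw [hchoquet]
  exact hpos.sub hneg

theorem abs_choquet_sub_rpow_le [MeasurableSpace α] {p : ℝ} (hμ0 : μ ∅ = 0) (hμ : Monotone μ)
    (hsub : IsSubmodular μ) (hcb : IsContinuousFromBelow μ) (hp : 1 ≤ p) (hA : MeasurableSet A)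
    (hAB : A ⊆ B) (hum : Measurable u) (hvm : Measurable v)
    (hu : IntegrableOn (layer μ B fun ω => |u ω| ^ p) (Ioi 0))
    (hv : IntegrableOn (layer μ B fun ω => |v ω| ^ p) (Ioi 0)) :
    |choquet μ A u - choquet μ A v| ^ p ≤ μ B ^ (p - 1) * choquet μ B fun ω => |u ω - v ω| ^ p := by
  have hui := (choquetIntegrable_of_rpow hμ0 hμ hp hu).mono_set hμ0 hμ hAB
  have hvi := (choquetIntegrable_of_rpow hμ0 hμ hp hv).mono_set hμ0 hμ hAB
  have huv := integrableOn_layer_abs_sub_rpow hμ0 hμ hsub (by linarith) hu hv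
  have hrpow0 : 0 ≤ fun ω => |u ω - v ω| ^ p := fun ω => Real.rpow_nonneg (abs_nonneg _) p
  calc |choquet μ A u - choquet μ A v| ^ p ≤ (choquet μ A fun ω => |u ω - v ω|) ^ p := by
        gcongr
        exact abs_choquet_sub_choquet_le hμ0 hμ hsub hcb hA hum hvm hui hvi
    _ ≤ μ A ^ (p - 1) * choquet μ A fun ω => |u ω - v ω| ^ p :=
        choquet_rpow_le hμ0 hμ hp (fun ω => abs_nonneg _)
          (hui.of_abs_le_add hμ0 hμ hsub hvi fun ω => abs_sub _ _)
          (integrableOn_layer_mono_set hμ0 hμ hAB huv)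
    _ ≤ μ B ^ (p - 1) * choquet μ B fun ω => |u ω - v ω| ^ p :=
        mul_le_mul (Real.rpow_le_rpow (apply_nonneg_of_empty hμ0 hμ A) (hμ hAB) (by linarith))
          (choquet_mono_set_s14 hμ0 hμ hAB hrpow0 huv) (choquet_nonneg_s14 hμ0 hμ hrpow0)
          (Real.rpow_nonneg (apply_nonneg_of_empty hμ0 hμ B) _)

noncomputable def volterraChoquet (μ : Set ℝ → ℝ) (f : ℝ → ℝ) (x : ℝ) : ℝ :=
  choquet μ (Icc 0 x) f

theorem memLp_volterraChoquet {μ : Set ℝ → ℝ} {p : ℝ} {f : ℝ → ℝ} (hμ0 : μ ∅ = 0)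
    (hμ : Monotone μ) (hsub : IsSubmodular μ) (hp : 1 ≤ p) (hf : MemLp μ p f) :
    MemLp μ p (volterraChoquet μ f) := by
  have hI : Monotone fun x : ℝ => Icc 0 x := fun _ _ hxy => Icc_subset_Icc_right hxy
  have hfi : ChoquetIntegrable μ (Icc 0 1) f := choquetIntegrable_of_rpow hμ0 hμ hp hf.2
  refine ⟨measurable_choquet_of_monotone hμ0 hμ hI f,
    integrableOn_layer_of_le_const hμ0 hμ (C := (choquet μ (Icc 0 1) fun s => |f s|) ^ p)
      fun t ht => ?_⟩
  exact Real.rpow_le_rpow (abs_nonneg _) ((abs_choquet_le hμ0 hμ hsub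
    (hfi.mono_set hμ0 hμ (hI ht.2))).trans (choquet_mono_set_s14 hμ0 hμ (hI ht.2)
    (fun s => abs_nonneg _) hfi)) (by linarith)

theorem volterraChoquet_Lp_lipschitz_general
    (μ : Set ℝ → ℝ) (hμ0 : μ ∅ = 0)
    (hμmono : ∀ A B : Set ℝ, A ⊆ B → μ A ≤ μ B)
    (hμsub : ∀ A B : Set ℝ, μ (A ∪ B) + μ (A ∩ B) ≤ μ A + μ B)
    (hμcb : ∀ A : ℕ → Set ℝ, (∀ k, MeasurableSet (A k)) → Monotone A →
      Tendsto (fun k => μ (A k)) atTop (𝓝 (μ (⋃ k, A k))))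
    (p : ℝ) (hp : 1 < p)
    (f g : ℝ → ℝ) (hf : MemLp μ p f) (hg : MemLp μ p g) :
    MemLp μ p (fun x => choquet μ (Icc 0 x) f) ∧
    (choquet μ (Icc 0 1)
        (fun t => |choquet μ (Icc 0 t) f - choquet μ (Icc 0 t) g| ^ p)) ^ (1/p)
      ≤ μ (Icc 0 1) *
        (choquet μ (Icc 0 1) (fun s => |f s - g s| ^ p)) ^ (1/p) := by
  have hμ : Monotone μ := fun A B hAB => hμmono A B hAB
  set m := μ (Icc 0 1)
  set N := choquet μ (Icc 0 1) fun s => |f s - g s| ^ p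
  have hm : 0 ≤ m := apply_nonneg_of_empty hμ0 hμ _
  have hN : 0 ≤ N := choquet_nonneg_s14 hμ0 hμ fun s => Real.rpow_nonneg (abs_nonneg _) p
  refine ⟨memLp_volterraChoquet hμ0 hμ hμsub hp.le hf, ?_⟩
  calc (choquet μ (Icc 0 1) fun t => |choquet μ (Icc 0 t) f - choquet μ (Icc 0 t) g| ^ p) ^ (1 / p)
      ≤ (m ^ (p - 1) * N * m) ^ (1 / p) := by
        gcongr
        · exact choquet_nonneg_s14 hμ0 hμ fun t => Real.rpow_nonneg (abs_nonneg _) p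
        · exact choquet_le_of_le_const hμ0 hμ (fun t => Real.rpow_nonneg (abs_nonneg _) p)
            (by positivity) fun t ht => abs_choquet_sub_rpow_le hμ0 hμ hμsub hμcb hp.le
              measurableSet_Icc (Icc_subset_Icc_right ht.2) hf.1 hg.1 hf.2 hg.2
    _ = m * N ^ (1 / p) := by
        rw [mul_right_comm, ← Real.rpow_add_one' hm (by linarith), sub_add_cancel,
          Real.mul_rpow (by positivity) hN, one_div, Real.rpow_rpow_inv hm (by linarith)]

/-- For `μ` monotone, submodular, continuous from below and above on the Borel subsets of
`[0,1]` and `1 < p < ∞`, the Volterra–Choquet operator maps `L_{p,μ}([0,1])` into itself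
and `‖V(f) − V(g)‖_{L_{p,μ}} ≤ μ([0,1])·‖f − g‖_{L_{p,μ}}`. -/
theorem volterraChoquet_Lp_lipschitz
    (μ : Set ℝ → ℝ) (hμ0 : μ ∅ = 0)
    (hμmono : ∀ A B : Set ℝ, A ⊆ B → μ A ≤ μ B)
    (hμsub : ∀ A B : Set ℝ, μ (A ∪ B) + μ (A ∩ B) ≤ μ A + μ B)
    (hμcb : ∀ A : ℕ → Set ℝ, (∀ k, MeasurableSet (A k)) → Monotone A →
      Tendsto (fun k => μ (A k)) atTop (𝓝 (μ (⋃ k, A k))))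
    (hμca : ∀ A : ℕ → Set ℝ, (∀ k, MeasurableSet (A k)) → Antitone A →
      Tendsto (fun k => μ (A k)) atTop (𝓝 (μ (⋂ k, A k))))
    (p : ℝ) (hp : 1 < p)
    (f g : ℝ → ℝ) (hf : MemLp μ p f) (hg : MemLp μ p g) :
    MemLp μ p (fun x => choquet μ (Icc 0 x) f) ∧
    (choquet μ (Icc 0 1)
        (fun t => |choquet μ (Icc 0 t) f - choquet μ (Icc 0 t) g| ^ p)) ^ (1/p)
      ≤ μ (Icc 0 1) *
        (choquet μ (Icc 0 1) (fun s => |f s - g s| ^ p)) ^ (1/p) :=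
  volterraChoquet_Lp_lipschitz_general μ hμ0 hμmono hμsub hμcb p hp f g hf hg
end
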